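/- arXiv:1301.1038 — 4 statements merged into one kernel-verified Lean document; each statement's English description precedes it below -/
import Mathlib

section
/- Let (S,T) be a Cuntz-type representation of F_θ^+ on H (m ≥ 2 or n ≥ 2) and let 𝔖 be the unital WOT-closed algebra it generates. Given k,l > 0, let 𝔍_{k,l} be the WOT-closed right ideal of 𝔖 generated by the row-isometry [S_uT_v : |u|=k, |v|=l], i.e. the WOT-closure of the set of finite sums Σ_{|u|=k,|v|=l} S_uT_vA_{u,v} with A_{u,v} ∈ 𝔖. Then 𝔖 is self-adjoint (equivalently, 𝔖 is a von Neumann algebra) if and only if the identity operator I belongs to 𝔍_{k,l}. -/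
noncomputable section

open scoped InnerProductSpace ComplexInnerProductSpace Classical

section GeneralDefs

variable {E : Type*} [NormedAddCommGroup E] [InnerProductSpace ℂ E]

/-- The operator associated to a word: `wordOp V [a₁, …, a_r] = V a₁ * ⋯ * V a_r`. -/
def wordOp {ι : Type*} (V : ι → E →L[ℂ] E) (w : List ι) : E →L[ℂ] E :=
  (w.map V).prod

/-- The operator associated to a word of fixed length `k` given as a function `Fin k → ι`. -/
def fnWordOp {ι : Type*} {k : ℕ} (V : ι → E →L[ℂ] E) (u : Fin k → ι) : E →L[ℂ] E :=
  wordOp V (List.ofFn u)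

/-- The closure of a set of operators in the weak operator topology, described via
basic WOT-neighbourhoods (finitely many vector functionals). -/
def wotClosure (S : Set (E →L[ℂ] E)) : Set (E →L[ℂ] E) :=
  {A | ∀ ε > (0 : ℝ), ∀ F : Finset (E × E), ∃ B ∈ S, ∀ p ∈ F, ‖⟪p.1, (A - B) p.2⟫‖ < ε}

/-- The unital WOT-closed algebra generated by a set of operators. -/
def genWotAlg (G : Set (E →L[ℂ] E)) : Set (E →L[ℂ] E) :=
  wotClosure ((Algebra.adjoin ℂ G : Subalgebra ℂ (E →L[ℂ] E)) : Set (E →L[ℂ] E))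

/-- A wandering vector for a row-isometry `V = [V_a : a ∈ ι]`: a unit vector whose orbit
under all words in the `V_a` is an orthonormal family. -/
def IsWandering {ι : Type*} (V : ι → E →L[ℂ] E) (ζ : E) : Prop :=
  ‖ζ‖ = 1 ∧ ∀ w w' : List ι,
    ⟪wordOp V w ζ, wordOp V w' ζ⟫ = if w = w' then 1 else 0

/-- Restriction of an operator to an invariant subspace (junk value `0` if not invariant). -/
def restrictCLM (A : E →L[ℂ] E) (M : Submodule ℂ E) : M →L[ℂ] M :=
  if h : ∀ x ∈ M, A x ∈ M then
    { toFun := fun x => ⟨A x, h x x.2⟩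
      map_add' := by intro x y; ext; simp
      map_smul' := by intro c x; ext; simp
      cont := Continuous.subtype_mk (A.continuous.comp continuous_subtype_val) _ }
  else 0

/-- The unital WOT-closed algebra on `M` generated by the restrictions of the `V a` to `M`. -/
def rowAlgOn {ι : Type*} (V : ι → E →L[ℂ] E) (M : Submodule ℂ E) : Set (M →L[ℂ] M) :=
  genWotAlg (Set.range fun a => restrictCLM (V a) M)

/-- The unital WOT-closed algebra on `M` generated by the restrictions of the `V a`
is self-adjoint. -/
def restrictedAlgSelfAdjoint {ι : Type*} (V : ι → E →L[ℂ] E) (M : Submodule ℂ E) : Prop :=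
  ∀ A ∈ rowAlgOn V M, ∃ B ∈ rowAlgOn V M,
    ∀ x y : M, ⟪((A x : M) : E), (y : E)⟫ = ⟪(x : E), ((B y : M) : E)⟫

variable [CompleteSpace E]

/-- A row-isometry is of dilation type if it is defect free and has no nonzero reducing
subspace on which it is either absolutely continuous (spanned by wandering vectors) or
singular (generating a self-adjoint WOT-closed algebra). -/
def IsDilationType {ι : Type*} [Fintype ι] (V : ι → E →L[ℂ] E) : Prop :=
  (∑ a, V a * star (V a)) = 1 ∧
    ¬ ∃ M : Submodule ℂ E, M ≠ ⊥ ∧ IsClosed (M : Set E) ∧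
      (∀ a, ∀ x ∈ M, V a x ∈ M) ∧ (∀ a, ∀ x ∈ M, star (V a) x ∈ M) ∧
      ((M = (Submodule.span ℂ {ζ : E | ζ ∈ M ∧ IsWandering V ζ}).topologicalClosure) ∨
        restrictedAlgSelfAdjoint V M)

end GeneralDefs

/-- An isometric representation of the single-vertex 2-graph `F_θ⁺` on a Hilbert space `H`. -/
structure TwoGraphRep (m n : ℕ) (θ : Equiv.Perm (Fin m × Fin n)) (H : Type*)
    [NormedAddCommGroup H] [InnerProductSpace ℂ H] [CompleteSpace H] where
  S : Fin m → H →L[ℂ] H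
  T : Fin n → H →L[ℂ] H
  isometS : ∀ i i', star (S i) * S i' = if i = i' then 1 else 0
  isometT : ∀ j j', star (T j) * T j' = if j = j' then 1 else 0
  comm : ∀ i j, S i * T j = T (θ (i, j)).2 * S (θ (i, j)).1

namespace TwoGraphRep

variable {m n : ℕ} {θ : Equiv.Perm (Fin m × Fin n)} {H : Type*}
  [NormedAddCommGroup H] [InnerProductSpace ℂ H] [CompleteSpace H]

/-- A representation is of Cuntz type if both row-isometries are defect free. -/
def CuntzType (ρ : TwoGraphRep m n θ H) : Prop :=
  (∑ i, ρ.S i * star (ρ.S i)) = 1 ∧ (∑ j, ρ.T j * star (ρ.T j)) = 1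

/-- The nonself-adjoint 2-graph algebra `𝔖`: the unital WOT-closed algebra generated by
the `S_i` and `T_j`. -/
def alg (ρ : TwoGraphRep m n θ H) : Set (H →L[ℂ] H) :=
  genWotAlg (Set.range ρ.S ∪ Set.range ρ.T)

/-- The von Neumann algebra generated by the `S_i` and `T_j`: the WOT-closure of the
unital *-algebra they generate. -/
def vnAlg (ρ : TwoGraphRep m n θ H) : Set (H →L[ℂ] H) :=
  genWotAlg ((Set.range ρ.S ∪ Set.range ρ.T) ∪ star '' (Set.range ρ.S ∪ Set.range ρ.T))

/-- Wandering vector for the row-isometry `[S_u T_v : |u| = k, |v| = l]`. -/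
def IsWanderingKL (ρ : TwoGraphRep m n θ H) (k l : ℕ) (ζ : H) : Prop :=
  ‖ζ‖ = 1 ∧ ∀ (p p' : ℕ) (u u' : List (Fin m)) (v v' : List (Fin n)),
    u.length = p * k → v.length = p * l → u'.length = p' * k → v'.length = p' * l →
    ⟪(wordOp ρ.S u * wordOp ρ.T v) ζ, (wordOp ρ.S u' * wordOp ρ.T v') ζ⟫ =
      if u = u' ∧ v = v' then 1 else 0

/-- The range of the structure projection `P_{k,l}`: the orthogonal complement of the
closed linear span of the wandering vectors of `[S_u T_v : |u| = k, |v| = l]`. -/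
def structSpaceKL (ρ : TwoGraphRep m n θ H) (k l : ℕ) : Submodule ℂ H :=
  ((Submodule.span ℂ {ζ : H | ρ.IsWanderingKL k l ζ}).topologicalClosure)ᗮ

/-- The range of the first structure projection `P = ⋀_{k,l>0} P_{k,l}`. -/
def firstStructSpace (ρ : TwoGraphRep m n θ H) : Submodule ℂ H :=
  ⨅ (k : ℕ) (l : ℕ) (_ : 0 < k) (_ : 0 < l), ρ.structSpaceKL k l

/-- The row-isometry `[S_u T_v : |u| = k, |v| = l]`. -/
def rowKL (ρ : TwoGraphRep m n θ H) (k l : ℕ) :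
    ((Fin k → Fin m) × (Fin l → Fin n)) → H →L[ℂ] H :=
  fun p => fnWordOp ρ.S p.1 * fnWordOp ρ.T p.2

/-- A wandering vector for the representation `(S,T)`. -/
def IsWanderingRep (ρ : TwoGraphRep m n θ H) (ζ : H) : Prop :=
  ‖ζ‖ = 1 ∧ ∀ (u u' : List (Fin m)) (v v' : List (Fin n)),
    ⟪(wordOp ρ.S u * wordOp ρ.T v) ζ, (wordOp ρ.S u' * wordOp ρ.T v') ζ⟫ =
      if u = u' ∧ v = v' then 1 else 0

/-- The representation is irreducible: the only closed subspaces invariant under all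
`S_i, T_j, S_i*, T_j*` are `⊥` and `⊤`. -/
def Irreducible (ρ : TwoGraphRep m n θ H) : Prop :=
  ∀ M : Submodule ℂ H, IsClosed (M : Set H) →
    (∀ i, ∀ x ∈ M, ρ.S i x ∈ M) → (∀ i, ∀ x ∈ M, star (ρ.S i) x ∈ M) →
    (∀ j, ∀ x ∈ M, ρ.T j x ∈ M) → (∀ j, ∀ x ∈ M, star (ρ.T j) x ∈ M) →
    M = ⊥ ∨ M = ⊤

/-- The representation is atomic with standard basis `ξ`: every generator maps each basis
vector to a unimodular multiple of a basis vector. -/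
def AtomicBasis {Λ : Type*} (ρ : TwoGraphRep m n θ H) (ξ : HilbertBasis Λ ℂ H) : Prop :=
  (∀ i t, ∃ (c : ℂ) (t' : Λ), ‖c‖ = 1 ∧ ρ.S i (ξ t) = c • ξ t') ∧
  (∀ j t, ∃ (c : ℂ) (t' : Λ), ‖c‖ = 1 ∧ ρ.T j (ξ t) = c • ξ t')

/-- `x` has a blue ring: `S_u x ∈ 𝕋x` for some nonempty word `u`. -/
def HasBlueRing (ρ : TwoGraphRep m n θ H) (x : H) : Prop :=
  ∃ u : List (Fin m), u ≠ [] ∧ ∃ c : ℂ, ‖c‖ = 1 ∧ wordOp ρ.S u x = c • x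

/-- `x` has a red ring: `T_v x ∈ 𝕋x` for some nonempty word `v`. -/
def HasRedRing (ρ : TwoGraphRep m n θ H) (x : H) : Prop :=
  ∃ v : List (Fin n), v ≠ [] ∧ ∃ c : ℂ, ‖c‖ = 1 ∧ wordOp ρ.T v x = c • x

/-- `x` has a mixed ring: `T_v S_u x ∈ 𝕋x` for some nonempty words `u`, `v`. -/
def HasMixedRing (ρ : TwoGraphRep m n θ H) (x : H) : Prop :=
  ∃ (u : List (Fin m)) (v : List (Fin n)), u ≠ [] ∧ v ≠ [] ∧
    ∃ c : ℂ, ‖c‖ = 1 ∧ wordOp ρ.T v (wordOp ρ.S u x) = c • x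

end TwoGraphRep

/-!
If `𝔖` is self-adjoint, the Cuntz relation `∑ R_a R_a* = I` for the row `R = [S_u T_v]` already
exhibits `I` in the ideal, with coefficients `R_a* ∈ 𝔖`. Conversely, the `R_a` are isometries with
pairwise orthogonal ranges, so the WOT-continuous map `X ↦ R_b* X` sends the ideal into `𝔖`; hence
`R_b* ∈ 𝔖` once `I` lies in its closure. Expanding `S_i* = ∑_a (S_i* R_a) R_a*` then puts `S_i*` in
`𝔖`, since `k > 0` makes each `S_i* R_a` either `0` or a word in the generators; the same works for
`T_j*` after using the commutation relations to rewrite `R_a = T_{v'} S_{u'}` with `|v'| = l > 0`.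
-/

section WotClosure

variable {E : Type*} [NormedAddCommGroup E] [InnerProductSpace ℂ E]

lemma subset_wotClosure (S : Set (E →L[ℂ] E)) : S ⊆ wotClosure S :=
  fun A hA _ hε _ => ⟨A, hA, fun p _ => by simp [hε]⟩

lemma wotClosure_mono {S S' : Set (E →L[ℂ] E)} (h : S ⊆ S') : wotClosure S ⊆ wotClosure S' :=
  fun _ hA ε hε F => let ⟨B, hB, hAB⟩ := hA ε hε F; ⟨B, h hB, hAB⟩

lemma norm_inner_add_apply_lt {D D' : E →L[ℂ] E} {x y : E} {ε : ℝ}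
    (hD : ‖⟪x, D y⟫‖ < ε / 2) (hD' : ‖⟪x, D' y⟫‖ < ε / 2) : ‖⟪x, (D + D') y⟫‖ < ε :=
  calc ‖⟪x, (D + D') y⟫‖ ≤ ‖⟪x, D y⟫‖ + ‖⟪x, D' y⟫‖ := by
        rw [add_apply, inner_add_right]; exact norm_add_le _ _
    _ < ε := by linarith

lemma wotClosure_wotClosure (S : Set (E →L[ℂ] E)) : wotClosure (wotClosure S) = wotClosure S := by
  refine (subset_wotClosure _).antisymm' fun A hA ε hε F => ?_
  obtain ⟨B, hB, hAB⟩ := hA (ε / 2) (by positivity) F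
  obtain ⟨C, hC, hBC⟩ := hB (ε / 2) (by positivity) F
  refine ⟨C, hC, fun p hp => ?_⟩
  rw [← sub_add_sub_cancel A B C]
  exact norm_inner_add_apply_lt (hAB p hp) (hBC p hp)

lemma add_mem_wotClosure {S S' : Set (E →L[ℂ] E)} {A A' : E →L[ℂ] E}
    (hA : A ∈ wotClosure S) (hA' : A' ∈ wotClosure S') :
    A + A' ∈ wotClosure (Set.image2 (· + ·) S S') := by
  intro ε hε F
  obtain ⟨B, hB, hAB⟩ := hA (ε / 2) (by positivity) F
  obtain ⟨B', hB', hAB'⟩ := hA' (ε / 2) (by positivity) F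
  refine ⟨B + B', Set.mem_image2_of_mem hB hB', fun p hp => ?_⟩
  rw [add_sub_add_comm]
  exact norm_inner_add_apply_lt (hAB p hp) (hAB' p hp)

/-- `hfg` bounds every vector functional of `f D` by one of `D`, which makes `f` WOT-continuous. -/
lemma map_mem_wotClosure (f : (E →L[ℂ] E) →+ (E →L[ℂ] E)) (g : E × E → E × E)
    (hfg : ∀ D p, ‖⟪p.1, f D p.2⟫‖ ≤ ‖⟪(g p).1, D (g p).2⟫‖)
    {S : Set (E →L[ℂ] E)} {A : E →L[ℂ] E} (hA : A ∈ wotClosure S) :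
    f A ∈ wotClosure (f '' S) := by
  intro ε hε F
  obtain ⟨B, hB, hAB⟩ := hA ε hε (F.image g)
  refine ⟨f B, Set.mem_image_of_mem f hB, fun p hp => ?_⟩
  rw [← map_sub]
  exact (hfg _ p).trans_lt (hAB (g p) (Finset.mem_image_of_mem g hp))

lemma mul_right_mem_wotClosure (B : E →L[ℂ] E) {S : Set (E →L[ℂ] E)} {A : E →L[ℂ] E}
    (hA : A ∈ wotClosure S) : A * B ∈ wotClosure ((· * B) '' S) :=
  map_mem_wotClosure (AddMonoidHom.mulRight B) (fun p => (p.1, B p.2)) (fun _ _ => le_rfl) hA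

variable [CompleteSpace E]

lemma mul_left_mem_wotClosure (C : E →L[ℂ] E) {S : Set (E →L[ℂ] E)} {A : E →L[ℂ] E}
    (hA : A ∈ wotClosure S) : C * A ∈ wotClosure ((C * ·) '' S) :=
  map_mem_wotClosure (AddMonoidHom.mulLeft C) (fun p => (ContinuousLinearMap.adjoint C p.1, p.2))
    (fun D p => by simp [ContinuousLinearMap.adjoint_inner_left]) hA

lemma star_mem_wotClosure {S : Set (E →L[ℂ] E)} {A : E →L[ℂ] E} (hA : A ∈ wotClosure S) :
    star A ∈ wotClosure (star '' S) :=
  map_mem_wotClosure (starAddEquiv (R := E →L[ℂ] E)).toAddMonoidHom Prod.swap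
    (fun D p => by
      simp [ContinuousLinearMap.star_eq_adjoint, ContinuousLinearMap.adjoint_inner_right,
        norm_inner_symm]) hA

end WotClosure

section GenWotAlg

variable {E : Type*} [NormedAddCommGroup E] [InnerProductSpace ℂ E] {G : Set (E →L[ℂ] E)}

lemma adjoin_subset_genWotAlg : (Algebra.adjoin ℂ G : Set (E →L[ℂ] E)) ⊆ genWotAlg G :=
  subset_wotClosure _

lemma wotClosure_subset_genWotAlg {S : Set (E →L[ℂ] E)} (h : S ⊆ genWotAlg G) :
    wotClosure S ⊆ genWotAlg G :=
  (wotClosure_mono h).trans (wotClosure_wotClosure _).subset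

lemma add_mem_genWotAlg {A B : E →L[ℂ] E} (hA : A ∈ genWotAlg G) (hB : B ∈ genWotAlg G) :
    A + B ∈ genWotAlg G := by
  refine wotClosure_subset_genWotAlg ?_ (add_mem_wotClosure hA hB)
  rintro _ ⟨C, hC, D, hD, rfl⟩
  exact adjoin_subset_genWotAlg (add_mem hC hD)

variable [CompleteSpace E]

lemma mul_mem_genWotAlg_of_mem_adjoin {C A : E →L[ℂ] E} (hC : C ∈ Algebra.adjoin ℂ G)
    (hA : A ∈ genWotAlg G) : C * A ∈ genWotAlg G := by
  refine wotClosure_mono ?_ (mul_left_mem_wotClosure C hA)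
  rintro _ ⟨B, hB, rfl⟩
  exact mul_mem hC hB

lemma mul_mem_genWotAlg {A B : E →L[ℂ] E} (hA : A ∈ genWotAlg G) (hB : B ∈ genWotAlg G) :
    A * B ∈ genWotAlg G := by
  refine wotClosure_subset_genWotAlg ?_ (mul_right_mem_wotClosure B hA)
  rintro _ ⟨C, hC, rfl⟩
  exact mul_mem_genWotAlg_of_mem_adjoin hC hB

variable (G) in
def genWotSubalgebra : Subalgebra ℂ (E →L[ℂ] E) where
  carrier := genWotAlg G
  mul_mem' := mul_mem_genWotAlg
  add_mem' := add_mem_genWotAlg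
  algebraMap_mem' c := adjoin_subset_genWotAlg (algebraMap_mem _ c)

lemma star_mem_genWotAlg (hG : ∀ A ∈ G, star A ∈ genWotAlg G) {A : E →L[ℂ] E}
    (hA : A ∈ genWotAlg G) : star A ∈ genWotAlg G := by
  have hadjoin : Algebra.adjoin ℂ G ≤ star (genWotSubalgebra G) :=
    Algebra.adjoin_le fun B hB => (Subalgebra.mem_star_iff _ _).2 (hG B hB)
  refine wotClosure_subset_genWotAlg ?_ (star_mem_wotClosure hA)
  rintro _ ⟨B, hB, rfl⟩
  exact (Subalgebra.mem_star_iff _ _).1 (hadjoin hB)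

end GenWotAlg

section Words

variable {E : Type*} [NormedAddCommGroup E] [InnerProductSpace ℂ E] {ι : Type*}
  (V : ι → E →L[ℂ] E)

lemma fnWordOp_zero (u : Fin 0 → ι) : fnWordOp V u = 1 := rfl

lemma fnWordOp_succ {k : ℕ} (u : Fin (k + 1) → ι) :
    fnWordOp V u = V (u 0) * fnWordOp V (Fin.tail u) := by
  simp only [fnWordOp, wordOp, List.ofFn_succ, List.map_cons, List.prod_cons]
  rfl

lemma fnWordOp_mem {s : Subalgebra ℂ (E →L[ℂ] E)} (hV : ∀ a, V a ∈ s) {k : ℕ} (u : Fin k → ι) :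
    fnWordOp V u ∈ s :=
  Submonoid.list_prod_mem s.toSubmonoid (by simpa using fun i => hV (u i))

variable [CompleteSpace E]

lemma star_fnWordOp_mul_fnWordOp [DecidableEq ι]
    (hV : ∀ a b, star (V a) * V b = if a = b then 1 else 0) :
    ∀ {k : ℕ} (u u' : Fin k → ι), star (fnWordOp V u) * fnWordOp V u' = if u = u' then 1 else 0
  | 0, u, u' => by simp [fnWordOp_zero, Subsingleton.elim u u']
  | k + 1, u, u' => by
    have hsplit : u = u' ↔ u 0 = u' 0 ∧ Fin.tail u = Fin.tail u' := by
      rw [← Fin.cons_self_tail u, ← Fin.cons_self_tail u', Fin.cons_inj]; simp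
    rw [fnWordOp_succ, fnWordOp_succ, star_mul, mul_assoc, ← mul_assoc (star (V _)), hV]
    by_cases h0 : u 0 = u' 0
    · simp only [h0, if_true, one_mul, star_fnWordOp_mul_fnWordOp hV, hsplit, true_and]
    · simp [h0, hsplit]

lemma sum_fnWordOp_mul_star [Fintype ι] (hV : ∑ a, V a * star (V a) = 1) :
    ∀ k : ℕ, ∑ u : Fin k → ι, fnWordOp V u * star (fnWordOp V u) = 1
  | 0 => by simp [fnWordOp_zero]
  | k + 1 => by
    rw [← (Fin.consEquiv fun _ => ι).sum_comp, Fintype.sum_prod_type]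
    calc ∑ a, ∑ u : Fin k → ι, fnWordOp V (Fin.cons a u) * star (fnWordOp V (Fin.cons a u))
        = ∑ a, V a * (∑ u : Fin k → ι, fnWordOp V u * star (fnWordOp V u)) * star (V a) := by
          simp only [fnWordOp_succ, Fin.cons_zero, Fin.tail_cons, star_mul, Finset.mul_sum,
            Finset.sum_mul, mul_assoc]
      _ = 1 := by simp only [sum_fnWordOp_mul_star hV k, mul_one, hV]

end Words

section RowIdeal

variable {ι : Type*} [Fintype ι]

def rowRightIdeal {A : Type*} [Semiring A] (R : ι → A) (s : Set A) : Set A :=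
  {X | ∃ B : ι → A, (∀ a, B a ∈ s) ∧ X = ∑ a, R a * B a}

variable {A : Type*} [Semiring A] [Star A] {R : ι → A}

lemma one_mem_rowRightIdeal {s : Set A} (hR : ∑ a, R a * star (R a) = 1)
    (hs : ∀ a, star (R a) ∈ s) : 1 ∈ rowRightIdeal R s :=
  ⟨fun a => star (R a), hs, hR.symm⟩

lemma mem_of_mul_mem_of_sum_mul_star_eq_one {S : Type*} [SetLike S A] [SubsemiringClass S A]
    {s : S} (hR : ∑ a, R a * star (R a) = 1) (hs : ∀ a, star (R a) ∈ s) {C : A}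
    (hC : ∀ a, C * R a ∈ s) : C ∈ s := by
  have hC_eq : C = ∑ a, C * R a * star (R a) := by
    simp only [mul_assoc, ← Finset.mul_sum, hR, mul_one]
  rw [hC_eq]
  exact sum_mem fun a _ => mul_mem (hC a) (hs a)

lemma star_mul_mul_mem_of_orthonormal {κ : Type*} [DecidableEq κ] {W : κ → A}
    (hW : ∀ j j', star (W j) * W j' = if j = j' then 1 else 0) {S : Type*} [SetLike S A]
    [SubsemiringClass S A] {s : S} {X : A} (hX : X ∈ s) (j j' : κ) :
    star (W j) * (W j' * X) ∈ s := by
  rw [← mul_assoc, hW]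
  split_ifs
  · rwa [one_mul]
  · rw [zero_mul]; exact zero_mem s

variable {E : Type*} [NormedAddCommGroup E] [InnerProductSpace ℂ E] [CompleteSpace E]

lemma star_mem_genWotAlg_of_one_mem_wotClosure [DecidableEq ι] {G : Set (E →L[ℂ] E)}
    {R : ι → E →L[ℂ] E} (hR : ∀ a b, star (R a) * R b = if a = b then 1 else 0)
    (h1 : 1 ∈ wotClosure (rowRightIdeal R (genWotAlg G))) (b : ι) :
    star (R b) ∈ genWotAlg G := by
  have h := mul_left_mem_wotClosure (star (R b)) h1
  rw [mul_one] at h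
  refine wotClosure_subset_genWotAlg ?_ h
  rintro _ ⟨_, ⟨B, hB, rfl⟩, rfl⟩
  simp only [Finset.mul_sum, ← mul_assoc, hR, ite_mul, one_mul, zero_mul, Finset.sum_ite_eq,
    Finset.mem_univ, if_true]
  exact hB b

end RowIdeal

namespace TwoGraphRep

variable {m n : ℕ} {θ : Equiv.Perm (Fin m × Fin n)} {H : Type*}
  [NormedAddCommGroup H] [InnerProductSpace ℂ H] [CompleteSpace H] (ρ : TwoGraphRep m n θ H)

def generators : Set (H →L[ℂ] H) := Set.range ρ.S ∪ Set.range ρ.T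

lemma S_mem_adjoin (i : Fin m) : ρ.S i ∈ Algebra.adjoin ℂ ρ.generators :=
  Algebra.subset_adjoin (Or.inl ⟨i, rfl⟩)

lemma T_mem_adjoin (j : Fin n) : ρ.T j ∈ Algebra.adjoin ℂ ρ.generators :=
  Algebra.subset_adjoin (Or.inr ⟨j, rfl⟩)

lemma rowKL_mem_adjoin (k l : ℕ) (a : (Fin k → Fin m) × (Fin l → Fin n)) :
    ρ.rowKL k l a ∈ Algebra.adjoin ℂ ρ.generators :=
  mul_mem (fnWordOp_mem _ ρ.S_mem_adjoin _) (fnWordOp_mem _ ρ.T_mem_adjoin _)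

lemma S_mul_fnWordOp_T_eq : ∀ {l : ℕ} (i : Fin m) (v : Fin l → Fin n),
    ∃ (v' : Fin l → Fin n) (i' : Fin m), ρ.S i * fnWordOp ρ.T v = fnWordOp ρ.T v' * ρ.S i'
  | 0, i, _ => ⟨Fin.elim0, i, by simp [fnWordOp_zero]⟩
  | l + 1, i, v => by
    obtain ⟨v', i', h⟩ := S_mul_fnWordOp_T_eq (θ (i, v 0)).1 (Fin.tail v)
    refine ⟨Fin.cons (θ (i, v 0)).2 v', i', ?_⟩
    rw [fnWordOp_succ, fnWordOp_succ, Fin.cons_zero, Fin.tail_cons, ← mul_assoc, ρ.comm,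
      mul_assoc, h, mul_assoc]

lemma fnWordOp_S_mul_fnWordOp_T_eq : ∀ {k l : ℕ} (u : Fin k → Fin m) (v : Fin l → Fin n),
    ∃ (v' : Fin l → Fin n) (u' : Fin k → Fin m),
      fnWordOp ρ.S u * fnWordOp ρ.T v = fnWordOp ρ.T v' * fnWordOp ρ.S u'
  | 0, _, _, v => ⟨v, Fin.elim0, by simp [fnWordOp_zero]⟩
  | k + 1, _, u, v => by
    obtain ⟨v₁, u₁, h₁⟩ := fnWordOp_S_mul_fnWordOp_T_eq (Fin.tail u) v
    obtain ⟨v₂, i, h₂⟩ := ρ.S_mul_fnWordOp_T_eq (u 0) v₁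
    refine ⟨v₂, Fin.cons i u₁, ?_⟩
    rw [fnWordOp_succ, fnWordOp_succ, Fin.cons_zero, Fin.tail_cons, mul_assoc, h₁,
      ← mul_assoc, h₂, mul_assoc]

lemma star_rowKL_mul_rowKL (k l : ℕ) (a b : (Fin k → Fin m) × (Fin l → Fin n)) :
    star (ρ.rowKL k l a) * ρ.rowKL k l b = if a = b then 1 else 0 := by
  rw [rowKL, rowKL, star_mul, mul_assoc, ← mul_assoc (star (fnWordOp ρ.S a.1)),
    star_fnWordOp_mul_fnWordOp ρ.S ρ.isometS]
  by_cases h₁ : a.1 = b.1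
  · rw [if_pos h₁, one_mul, star_fnWordOp_mul_fnWordOp ρ.T ρ.isometT]
    simp [Prod.ext_iff, h₁]
  · simp [Prod.ext_iff, h₁]

lemma sum_rowKL_mul_star (hCuntz : ρ.CuntzType) (k l : ℕ) :
    ∑ a, ρ.rowKL k l a * star (ρ.rowKL k l a) = 1 := by
  calc ∑ a, ρ.rowKL k l a * star (ρ.rowKL k l a)
      = ∑ u : Fin k → Fin m, fnWordOp ρ.S u *
          (∑ v : Fin l → Fin n, fnWordOp ρ.T v * star (fnWordOp ρ.T v)) * star (fnWordOp ρ.S u) := by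
        simp only [Fintype.sum_prod_type, rowKL, star_mul, Finset.mul_sum, Finset.sum_mul,
          mul_assoc]
    _ = 1 := by
        simp only [sum_fnWordOp_mul_star ρ.T hCuntz.2, mul_one, sum_fnWordOp_mul_star ρ.S hCuntz.1]

lemma star_S_mul_rowKL_mem_adjoin {k : ℕ} (hk : 0 < k) (l : ℕ) (i : Fin m)
    (a : (Fin k → Fin m) × (Fin l → Fin n)) :
    star (ρ.S i) * ρ.rowKL k l a ∈ Algebra.adjoin ℂ ρ.generators := by
  obtain ⟨k, rfl⟩ := Nat.exists_eq_add_one_of_ne_zero hk.ne'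
  rw [rowKL, fnWordOp_succ, mul_assoc]
  exact star_mul_mul_mem_of_orthonormal ρ.isometS
    (mul_mem (fnWordOp_mem _ ρ.S_mem_adjoin _) (fnWordOp_mem _ ρ.T_mem_adjoin _)) _ _

lemma star_T_mul_rowKL_mem_adjoin (k : ℕ) {l : ℕ} (hl : 0 < l) (j : Fin n)
    (a : (Fin k → Fin m) × (Fin l → Fin n)) :
    star (ρ.T j) * ρ.rowKL k l a ∈ Algebra.adjoin ℂ ρ.generators := by
  obtain ⟨l, rfl⟩ := Nat.exists_eq_add_one_of_ne_zero hl.ne'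
  obtain ⟨v, u, h⟩ := ρ.fnWordOp_S_mul_fnWordOp_T_eq a.1 a.2
  rw [rowKL, h, fnWordOp_succ, mul_assoc]
  exact star_mul_mul_mem_of_orthonormal ρ.isometT
    (mul_mem (fnWordOp_mem _ ρ.T_mem_adjoin _) (fnWordOp_mem _ ρ.S_mem_adjoin _)) _ _

end TwoGraphRep

theorem statement2_general {m n : ℕ}
    {θ : Equiv.Perm (Fin m × Fin n)} {H : Type*}
    [NormedAddCommGroup H] [InnerProductSpace ℂ H] [CompleteSpace H]
    (ρ : TwoGraphRep m n θ H) (hCuntz : ρ.CuntzType)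
    (k l : ℕ) (hk : 0 < k) (hl : 0 < l) :
    (∀ A ∈ ρ.alg, star A ∈ ρ.alg) ↔
      (1 : H →L[ℂ] H) ∈ wotClosure
        {X : H →L[ℂ] H | ∃ A : ((Fin k → Fin m) × (Fin l → Fin n)) → (H →L[ℂ] H),
          (∀ a, A a ∈ ρ.alg) ∧ X = ∑ a, ρ.rowKL k l a * A a} := by
  change _ ↔ 1 ∈ wotClosure (rowRightIdeal (ρ.rowKL k l) (genWotAlg ρ.generators))
  have hrow := ρ.sum_rowKL_mul_star hCuntz k l
  constructor
  · intro hsa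
    exact subset_wotClosure _ <| one_mem_rowRightIdeal hrow fun a =>
      hsa _ (adjoin_subset_genWotAlg (ρ.rowKL_mem_adjoin k l a))
  · intro h1 A hA
    have hstar_row := star_mem_genWotAlg_of_one_mem_wotClosure (ρ.star_rowKL_mul_rowKL k l) h1
    refine star_mem_genWotAlg ?_ hA
    rintro _ (⟨i, rfl⟩ | ⟨j, rfl⟩)
    · exact mem_of_mul_mem_of_sum_mul_star_eq_one (s := genWotSubalgebra _) hrow hstar_row
        fun a => adjoin_subset_genWotAlg (ρ.star_S_mul_rowKL_mem_adjoin hk l i a)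
    · exact mem_of_mul_mem_of_sum_mul_star_eq_one (s := genWotSubalgebra _) hrow hstar_row
        fun a => adjoin_subset_genWotAlg (ρ.star_T_mul_rowKL_mem_adjoin k hl j a)

/-- `𝔖` is a von Neumann algebra iff the WOT-closed right ideal generated by the row-isometry
`[S_u T_v : |u|=k, |v|=l]` contains the identity. -/
theorem statement2 {m n : ℕ} (hm : 0 < m) (hn : 0 < n) (hmn : 2 ≤ m ∨ 2 ≤ n)
    {θ : Equiv.Perm (Fin m × Fin n)} {H : Type*}
    [NormedAddCommGroup H] [InnerProductSpace ℂ H] [CompleteSpace H]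
    (ρ : TwoGraphRep m n θ H) (hCuntz : ρ.CuntzType)
    (k l : ℕ) (hk : 0 < k) (hl : 0 < l) :
    (∀ A ∈ ρ.alg, star A ∈ ρ.alg) ↔
      (1 : H →L[ℂ] H) ∈ wotClosure
        {X : H →L[ℂ] H | ∃ A : ((Fin k → Fin m) × (Fin l → Fin n)) → (H →L[ℂ] H),
          (∀ a, A a ∈ ρ.alg) ∧ X = ∑ a, ρ.rowKL k l a * A a} :=
  statement2_general ρ hCuntz k l hk hl
end
end

section
/- Let m, n ≥ 2 and let (S,T) be an irreducible Cuntz-type atomic representation of F_θ^+ on H with standard basis {ξ_t}. Say a standard basis vector ξ has a blue ring if S_uξ ∈ 𝕋ξ for some nonempty word u over {1,…,m}, a red ring if T_vξ ∈ 𝕋ξ for some nonempty word v over {1,…,n}, and a mixed ring if T_vS_uξ ∈ 𝕋ξ for some nonempty words u, v. Suppose one of the following holds: (type 2a) some standard basis vector has a blue ring and no standard basis vector has a red ring; (type 2b) some standard basis vector has a red ring and no standard basis vector has a blue ring; (type 3b(i)) no standard basis vector has a blue or red ring, and some standard basis vector has a mixed ring. Then (S,T) has a wandering vector. -/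
noncomputable section

open scoped InnerProductSpace ComplexInnerProductSpace Classical

/-!
In an atomic representation of Cuntz type each `S_i` moves the standard basis vector `ξ_t` to a
unimodular multiple of some `ξ_{σ_i t}`, and the relations of a row isometry of Cuntz type say
exactly that `(i, t) ↦ σ_i t` is a bijection `Fin m × Λ ≃ Λ`. So `Λ` is an `m`-ary forest with a
parent map `β`, and likewise an `n`-ary forest with parent map `γ` for the `T_j`; the commutation
relations make `β` and `γ` commute. The vector `ξ_s` is wandering as soon as every vertex reaches
`s` along at most one path `β^p γ^q`.

If `γ` has no periodic points (no red rings), any two rings `β^a γ^b t = t` with `a > 0` have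
proportional exponents, so all of them enter `t` through the same child `x = β^p γ^q t` of `t`.
A child `s ≠ x` of `t` then lies on no ring, and `β^a s = γ^b s` with `a, b > 0` would create a
`γ`-cycle at `t`; together this gives uniqueness of paths to `s`. Type 2b is the same argument with
the roles of `β` and `γ` exchanged.
-/

open Function

section CommutingMaps

variable {Λ : Type*} {β γ : Λ → Λ}

def UniquePaths (β γ : Λ → Λ) (s : Λ) : Prop :=
  ∀ y p q p' q', β^[p] (γ^[q] y) = s → β^[p'] (γ^[q'] y) = s → p = p' ∧ q = q'

theorem UniquePaths.of_swap (hc : Function.Commute β γ) {s : Λ} (h : UniquePaths γ β s) :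
    UniquePaths β γ s := by
  intro y p q p' q' hpq hpq'
  rw [(hc.iterate_iterate _ _).eq] at hpq hpq'
  exact (h y q p q' p' hpq hpq').symm

theorem eq_zero_of_iterate_eq_self (hγ : periodicPts γ = ∅) {q : ℕ} {y : Λ}
    (h : γ^[q] y = y) : q = 0 := by
  by_contra hq
  have hy : y ∈ periodicPts γ := mk_mem_periodicPts (Nat.pos_of_ne_zero hq) h
  simp [hγ] at hy

variable (hc : Function.Commute β γ)
include hc

theorem iterate_add_iterate_add (p p' q q' : ℕ) (y : Λ) :
    β^[p + p'] (γ^[q + q'] y) = β^[p] (γ^[q] (β^[p'] (γ^[q'] y))) := by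
  rw [iterate_add_apply, iterate_add_apply γ, (hc.iterate_iterate p' q).eq]

theorem iterate_iterate_mul_of_eq {p q : ℕ} {t : Λ} (h : β^[p] (γ^[q] t) = t) (j : ℕ) :
    β^[p * j] (γ^[q * j] t) = t := by
  have hj : (β^[p] ∘ γ^[q])^[j] t = t := iterate_fixed h j
  rwa [(hc.iterate_iterate p q).comp_iterate, comp_apply, ← iterate_mul, ← iterate_mul] at hj

variable (hγ : periodicPts γ = ∅)
include hγ

theorem eq_of_iterate_iterate_eq {p q q' : ℕ} {t : Λ} (h : β^[p] (γ^[q] t) = t)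
    (h' : β^[p] (γ^[q'] t) = t) : q = q' := by
  wlog hqq : q ≤ q' generalizing q q'
  · exact (this h' h (by omega)).symm
  obtain ⟨r, rfl⟩ := Nat.exists_eq_add_of_le hqq
  have hr : γ^[r] t = t := by
    rwa [add_comm, iterate_add_apply, (hc.iterate_iterate p r).eq, h] at h'
  simp [eq_zero_of_iterate_eq_self hγ hr]

theorem mul_eq_mul_of_iterate_iterate_eq {p q p' q' : ℕ} {t : Λ} (h : β^[p] (γ^[q] t) = t)
    (h' : β^[p'] (γ^[q'] t) = t) : q * p' = q' * p := by
  have h₁ := iterate_iterate_mul_of_eq hc h p'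
  have h₂ := iterate_iterate_mul_of_eq hc h' p
  rw [mul_comm p' p] at h₂
  exact eq_of_iterate_iterate_eq hc hγ h₁ h₂

/-- Two rings through `t` enter `t` from the same vertex. -/
theorem iterate_eq_of_iterate_succ_eq {p q p' q' : ℕ} {t : Λ} (h : β^[p + 1] (γ^[q] t) = t)
    (h' : β^[p' + 1] (γ^[q'] t) = t) : β^[p] (γ^[q] t) = β^[p'] (γ^[q'] t) := by
  have hslope := mul_eq_mul_of_iterate_iterate_eq hc hγ h h'
  calc β^[p] (γ^[q] t) = β^[p] (γ^[q] (β^[(p + 1) * p'] (γ^[q * p'] t))) := by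
        rw [iterate_iterate_mul_of_eq hc h]
    _ = β^[p + (p + 1) * p'] (γ^[q + q * p'] t) := (iterate_add_iterate_add hc ..).symm
    _ = β^[p' + (p' + 1) * p] (γ^[q' + q' * p] t) := by
        rw [show p + (p + 1) * p' = p' + (p' + 1) * p by ring,
          show q + q * p' = q' + q' * p by linarith]
    _ = β^[p'] (γ^[q'] (β^[(p' + 1) * p] (γ^[q' * p] t))) := iterate_add_iterate_add hc ..
    _ = β^[p'] (γ^[q'] t) := by rw [iterate_iterate_mul_of_eq hc h']

variable {p q : ℕ} {t s : Λ} (hring : β^[p + 1] (γ^[q] t) = t) (hs : β s = t)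
include hring hs

theorem eq_zero_and_eq_zero_of_iterate_iterate_eq_self (hsx : s ≠ β^[p] (γ^[q] t)) {a b : ℕ}
    (h : β^[a] (γ^[b] s) = s) : a = 0 ∧ b = 0 := by
  cases a with
  | zero => exact ⟨rfl, eq_zero_of_iterate_eq_self hγ h⟩
  | succ a =>
    have h₁ : β^[a] (γ^[b] t) = s := by
      rwa [← hs, ← (hc.iterate_right b).eq, ← iterate_succ_apply]
    have h₂ : β^[a + 1] (γ^[b] t) = t := by rw [iterate_succ_apply', h₁, hs]
    exact absurd (h₁.symm.trans (iterate_eq_of_iterate_succ_eq hc hγ h₂ hring)) hsx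

theorem eq_zero_or_eq_zero_of_iterate_eq_iterate {a b : ℕ} (h : β^[a] s = γ^[b] s) :
    a = 0 ∨ b = 0 := by
  by_contra! hab
  have h₁ : β^[a] t = γ^[b] t := by
    rw [← hs, ← (hc.iterate_right b).eq, ← h, ← iterate_succ_apply, iterate_succ_apply']
  have h₂ : (β^[a])^[p + 1] t = (γ^[b])^[p + 1] t :=
    (hc.iterate_iterate a b).iterate_eq_of_map_eq (p + 1) h₁
  have h₃ := iterate_iterate_mul_of_eq hc hring a
  rw [(hc.iterate_iterate _ _).eq, mul_comm (p + 1) a, iterate_mul β a, h₂, ← iterate_mul,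
    ← iterate_add_apply] at h₃
  exact hab.2 (by simpa using (Nat.add_eq_zero_iff.1 (eq_zero_of_iterate_eq_self hγ h₃)).2)

theorem uniquePaths_of_parent_eq (hsx : s ≠ β^[p] (γ^[q] t)) : UniquePaths β γ s := by
  have hring_free a b :=
    eq_zero_and_eq_zero_of_iterate_iterate_eq_self hc hγ hring hs hsx (a := a) (b := b)
  intro y p₁ q₁ p₂ q₂ h₁ h₂
  wlog hp : p₁ ≤ p₂ generalizing p₁ q₁ p₂ q₂
  · exact (this p₂ q₂ p₁ q₁ h₂ h₁ (by omega)).imp Eq.symm Eq.symm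
  obtain ⟨d, rfl⟩ := Nat.exists_eq_add_of_le hp
  rcases le_total q₁ q₂ with hq | hq
  · obtain ⟨e, rfl⟩ := Nat.exists_eq_add_of_le hq
    rw [add_comm p₁, add_comm q₁, iterate_add_iterate_add hc, h₁] at h₂
    simp [hring_free _ _ h₂]
  · obtain ⟨e, rfl⟩ := Nat.exists_eq_add_of_le hq
    set z := β^[p₁] (γ^[q₂] y)
    have hz₁ : γ^[e] z = s := by
      rw [← h₁, ← zero_add p₁, add_comm q₂, iterate_add_iterate_add hc]; rfl
    have hz₂ : β^[d] z = s := by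
      rw [← h₂, add_comm p₁, ← zero_add q₂, iterate_add_iterate_add hc]; rfl
    have hde : d = 0 ∧ e = 0 := by
      have hcoincide : β^[d] s = γ^[e] s :=
        calc β^[d] s = β^[d] (γ^[e] z) := by rw [hz₁]
          _ = γ^[e] (β^[d] z) := (hc.iterate_iterate d e).eq z
          _ = γ^[e] s := by rw [hz₂]
      rcases eq_zero_or_eq_zero_of_iterate_eq_iterate hc hγ hring hs hcoincide with rfl | rfl
      · have hzs : z = s := hz₂
        exact ⟨rfl, eq_zero_of_iterate_eq_self hγ (hzs ▸ hz₁)⟩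
      · have hzs : z = s := hz₁
        exact ⟨(hring_free d 0 (hzs ▸ hz₂)).1, rfl⟩
    simp [hde]

end CommutingMaps

/- A bijection `e : ι × Λ ≃ Λ` makes `Λ` a forest in which every vertex `t` has exactly one child
`e (a, t)` for each label `a`, and exactly one parent. -/
namespace Forest

variable {ι κ Λ : Type*} (e : ι × Λ ≃ Λ)

def parent (x : Λ) : Λ := (e.symm x).2

def descend (u : List ι) (t : Λ) : Λ := u.foldr (fun a x => e (a, x)) t

@[simp] theorem parent_apply (a : ι) (t : Λ) : parent e (e (a, t)) = t := by simp [parent]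

@[simp] theorem descend_nil (t : Λ) : descend e [] t = t := rfl

@[simp] theorem descend_cons (a : ι) (u : List ι) (t : Λ) :
    descend e (a :: u) t = e (a, descend e u t) := rfl

theorem iterate_parent_descend (u : List ι) (t : Λ) :
    (parent e)^[u.length] (descend e u t) = t := by
  induction u with
  | nil => rfl
  | cons a u ih => rw [List.length_cons, iterate_succ_apply, descend_cons, parent_apply, ih]

theorem exists_descend_iterate_parent (k : ℕ) (x : Λ) :
    ∃ u : List ι, u.length = k ∧ descend e u ((parent e)^[k] x) = x := by
  induction k generalizing x with
  | zero => exact ⟨[], rfl, rfl⟩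
  | succ k ih =>
    obtain ⟨u, hu, hux⟩ := ih (parent e x)
    refine ⟨(e.symm x).1 :: u, by simp [hu], ?_⟩
    rw [iterate_succ_apply, descend_cons, hux, parent, Prod.mk.eta, Equiv.apply_symm_apply]

theorem eq_of_descend_eq {u u' : List ι} {t t' : Λ} (hl : u.length = u'.length)
    (h : descend e u t = descend e u' t') : u = u' ∧ t = t' := by
  induction u generalizing u' with
  | nil => cases u' <;> simp_all
  | cons a u ih =>
    cases u' with
    | nil => simp at hl
    | cons a' u' =>
      simp only [descend_cons, EmbeddingLike.apply_eq_iff_eq, Prod.mk.injEq] at h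
      obtain ⟨rfl, hu⟩ := h
      obtain ⟨rfl, rfl⟩ := ih (by simpa using hl) hu
      exact ⟨rfl, rfl⟩

theorem commute_parent (f : κ × Λ ≃ Λ) (h : ∀ i j t, ∃ i' j', e (i, f (j, t)) = f (j', e (i', t))) :
    Function.Commute (parent e) (parent f) := by
  intro x
  obtain ⟨⟨i, y⟩, rfl⟩ := e.surjective x
  obtain ⟨⟨j, z⟩, rfl⟩ := f.surjective y
  obtain ⟨i', j', h'⟩ := h i j z
  rw [h', parent_apply, parent_apply, ← h', parent_apply, parent_apply]

theorem exists_uniquePaths [Nontrivial ι] {γ : Λ → Λ} (hc : Function.Commute (parent e) γ)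
    (hγ : periodicPts γ = ∅) {p q : ℕ} {t : Λ} (hring : (parent e)^[p + 1] (γ^[q] t) = t) :
    ∃ s, UniquePaths (parent e) γ s := by
  obtain ⟨a, ha⟩ := exists_ne (e.symm ((parent e)^[p] (γ^[q] t))).1
  refine ⟨e (a, t), uniquePaths_of_parent_eq hc hγ hring (parent_apply e a t) fun h => ha ?_⟩
  rw [← h, Equiv.symm_apply_apply]

end Forest

section AtomicRow

variable {H : Type*} [NormedAddCommGroup H] [InnerProductSpace ℂ H] {ι Λ : Type*}
  (ξ : HilbertBasis Λ ℂ H)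

theorem inner_smul_basis_smul_basis (c c' : ℂ) (t t' : Λ) :
    ⟪c • ξ t, c' • ξ t'⟫ = if t = t' then (starRingEnd ℂ) c * c' else 0 := by
  rw [inner_smul_left, inner_smul_right, orthonormal_iff_ite.1 ξ.orthonormal]
  split_ifs <;> simp

theorem eq_of_smul_basis_eq {c c' : ℂ} {t t' : Λ} (hc : ‖c‖ = 1) (h : c • ξ t = c' • ξ t') :
    t = t' := by
  by_contra hne
  have hzero : ⟪c • ξ t, c • ξ t⟫ = 0 := by
    nth_rw 2 [h]
    rw [inner_smul_basis_smul_basis, if_neg hne]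
  rw [inner_smul_basis_smul_basis, if_pos rfl, RCLike.conj_mul, hc] at hzero
  simp at hzero

theorem orthonormal_of_unimodular_smul_basis {κ : Type*} {w : κ → H} {g : κ → Λ}
    (hg : Injective g) (hw : ∀ k, ∃ c : ℂ, ‖c‖ = 1 ∧ w k = c • ξ (g k)) : Orthonormal ℂ w := by
  choose c hc hcw using hw
  rw [orthonormal_iff_ite]
  intro k k'
  rw [hcw, hcw, inner_smul_basis_smul_basis, hg.eq_iff]
  split_ifs with h
  · subst h
    rw [RCLike.conj_mul, hc]
    simp
  · rfl

variable {V : ι → H →L[ℂ] H}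

theorem inner_apply_apply_of_isometries [CompleteSpace H] [DecidableEq ι]
    (hiso : ∀ a b, star (V a) * V b = if a = b then (1 : H →L[ℂ] H) else 0) (a b : ι) (x y : H) :
    ⟪V a x, V b y⟫ = if a = b then ⟪x, y⟫ else 0 := by
  rw [← ContinuousLinearMap.adjoint_inner_right, ← ContinuousLinearMap.star_eq_adjoint,
    ← mul_apply_eq_comp, hiso]
  split_ifs <;> simp

theorem exists_forest_of_atomic [CompleteSpace H] [DecidableEq ι] [Fintype ι]
    (hiso : ∀ a b, star (V a) * V b = if a = b then (1 : H →L[ℂ] H) else 0)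
    (hD : ∑ a, V a * star (V a) = 1)
    (hA : ∀ a t, ∃ (c : ℂ) (t' : Λ), ‖c‖ = 1 ∧ V a (ξ t) = c • ξ t') :
    ∃ e : ι × Λ ≃ Λ, ∀ a t, ∃ c : ℂ, ‖c‖ = 1 ∧ V a (ξ t) = c • ξ (e (a, t)) := by
  choose c σ hc hσ using hA
  have hinj : Injective fun p : ι × Λ => σ p.1 p.2 := by
    rintro ⟨a, t⟩ ⟨b, t'⟩ (h : σ a t = σ b t')
    have key := inner_apply_apply_of_isometries hiso a b (ξ t) (ξ t')
    rw [hσ, hσ, h, inner_smul_basis_smul_basis, if_pos rfl,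
      orthonormal_iff_ite.1 ξ.orthonormal] at key
    have hc₀ (a t) : c a t ≠ 0 := norm_ne_zero_iff.1 (by simp [hc])
    have hne : (starRingEnd ℂ) (c a t) * c b t' ≠ 0 :=
      mul_ne_zero ((map_ne_zero _).2 (hc₀ a t)) (hc₀ b t')
    split_ifs at key with hab htt
    · rw [hab, htt]
    all_goals exact absurd key hne
  have hsurj : Surjective fun p : ι × Λ => σ p.1 p.2 := by
    intro x
    by_contra! hx
    have hzero (a : ι) : star (V a) (ξ x) = 0 := by
      refine ξ.repr.map_eq_zero_iff.1 (lp.ext (funext fun t => ?_))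
      rw [ξ.repr_apply_apply, ContinuousLinearMap.star_eq_adjoint,
        ContinuousLinearMap.adjoint_inner_right, hσ, inner_smul_left,
        orthonormal_iff_ite.1 ξ.orthonormal, if_neg (hx (a, t))]
      simp
    have hξ := congrArg (· (ξ x)) hD
    simp only [sum_apply, mul_apply_eq_comp, hzero, map_zero,
      Finset.sum_const_zero, one_apply_eq_self] at hξ
    exact ξ.orthonormal.ne_zero x hξ.symm
  exact ⟨Equiv.ofBijective _ ⟨hinj, hsurj⟩, fun a t => ⟨c a t, hc a t, hσ a t⟩⟩

def HasWordRing (V : ι → H →L[ℂ] H) (x : H) : Prop :=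
  ∃ u : List ι, u ≠ [] ∧ ∃ c : ℂ, ‖c‖ = 1 ∧ wordOp V u x = c • x

variable {e : ι × Λ ≃ Λ} (hV : ∀ a t, ∃ c : ℂ, ‖c‖ = 1 ∧ V a (ξ t) = c • ξ (e (a, t)))
include hV

theorem exists_wordOp_apply_basis (u : List ι) (t : Λ) :
    ∃ c : ℂ, ‖c‖ = 1 ∧ wordOp V u (ξ t) = c • ξ (Forest.descend e u t) := by
  induction u with
  | nil => exact ⟨1, by simp [wordOp]⟩
  | cons a u ih =>
    obtain ⟨c, hc, hcu⟩ := ih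
    obtain ⟨d, hd, hda⟩ := hV a (Forest.descend e u t)
    refine ⟨c * d, by simp [hc, hd], ?_⟩
    simp only [wordOp, List.map_cons, List.prod_cons] at hcu ⊢
    rw [mul_apply_eq_comp, hcu, map_smul, hda, smul_smul, Forest.descend_cons]

theorem hasWordRing_basis_iff {t : Λ} :
    HasWordRing V (ξ t) ↔ ∃ p, (Forest.parent e)^[p + 1] t = t := by
  constructor
  · rintro ⟨u, hu, c, -, hc⟩
    obtain ⟨d, hd, hdu⟩ := exists_wordOp_apply_basis ξ hV u t
    have hut : Forest.descend e u t = t := eq_of_smul_basis_eq ξ hd (hdu.symm.trans hc)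
    refine ⟨u.length - 1, ?_⟩
    rw [Nat.sub_add_cancel (List.length_pos_iff.2 hu)]
    conv_lhs => rw [← hut]
    exact Forest.iterate_parent_descend e u t
  · rintro ⟨p, hp⟩
    obtain ⟨u, hu, hut⟩ := Forest.exists_descend_iterate_parent e (p + 1) t
    rw [hp] at hut
    obtain ⟨c, hc, hcu⟩ := exists_wordOp_apply_basis ξ hV u t
    exact ⟨u, by rintro rfl; simp at hu, c, hc, by rw [hcu, hut]⟩

theorem periodicPts_parent_eq_empty (h : ∀ t, ¬ HasWordRing V (ξ t)) :
    periodicPts (Forest.parent e) = ∅ := by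
  refine Set.eq_empty_of_forall_notMem fun t ⟨k, hk, hkt⟩ => h t ?_
  obtain ⟨p, rfl⟩ := Nat.exists_eq_succ_of_ne_zero hk.ne'
  exact (hasWordRing_basis_iff ξ hV).2 ⟨p, hkt⟩

end AtomicRow

section TwoGraph

variable {H : Type*} [NormedAddCommGroup H] [InnerProductSpace ℂ H] {ι κ Λ : Type*}
  (ξ : HilbertBasis Λ ℂ H)

theorem exists_wordOp_mul_wordOp_apply_basis {V : ι → H →L[ℂ] H} {W : κ → H →L[ℂ] H}
    {e : ι × Λ ≃ Λ} {f : κ × Λ ≃ Λ}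
    (hV : ∀ a t, ∃ c : ℂ, ‖c‖ = 1 ∧ V a (ξ t) = c • ξ (e (a, t)))
    (hW : ∀ b t, ∃ c : ℂ, ‖c‖ = 1 ∧ W b (ξ t) = c • ξ (f (b, t))) (u : List ι) (v : List κ)
    (t : Λ) : ∃ c : ℂ, ‖c‖ = 1 ∧
      (wordOp V u * wordOp W v) (ξ t) = c • ξ (Forest.descend e u (Forest.descend f v t)) := by
  obtain ⟨c, hc, hcv⟩ := exists_wordOp_apply_basis ξ hW v t
  obtain ⟨d, hd, hdu⟩ := exists_wordOp_apply_basis ξ hV u (Forest.descend f v t)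
  refine ⟨d * c, by simp [hc, hd], ?_⟩
  rw [mul_apply_eq_comp, hcv, map_smul, hdu, smul_smul, mul_comm]

variable [CompleteSpace H] {m n : ℕ} {θ : Equiv.Perm (Fin m × Fin n)} (ρ : TwoGraphRep m n θ H)
  {eS : Fin m × Λ ≃ Λ} {eT : Fin n × Λ ≃ Λ}
  (hS : ∀ i t, ∃ c : ℂ, ‖c‖ = 1 ∧ ρ.S i (ξ t) = c • ξ (eS (i, t)))
  (hT : ∀ j t, ∃ c : ℂ, ‖c‖ = 1 ∧ ρ.T j (ξ t) = c • ξ (eT (j, t)))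
include hS hT

theorem commute_parent_of_atomic : Function.Commute (Forest.parent eS) (Forest.parent eT) := by
  refine Forest.commute_parent eS eT fun i j t => ⟨(θ (i, j)).1, (θ (i, j)).2, ?_⟩
  obtain ⟨c, hc, hST⟩ := exists_wordOp_mul_wordOp_apply_basis ξ hS hT [i] [j] t
  obtain ⟨d, -, hTS⟩ := exists_wordOp_mul_wordOp_apply_basis ξ hT hS [(θ (i, j)).2] [(θ (i, j)).1] t
  simp only [wordOp, List.map_cons, List.map_nil, List.prod_singleton, ρ.comm] at hST hTS
  exact eq_of_smul_basis_eq ξ hc (hST.symm.trans hTS)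

theorem exists_iterate_eq_of_hasMixedRing {t : Λ} (h : ρ.HasMixedRing (ξ t)) :
    ∃ p q, (Forest.parent eS)^[p + 1] ((Forest.parent eT)^[q] t) = t := by
  obtain ⟨u, v, hu, -, c, -, hc⟩ := h
  obtain ⟨d, hd, hdc⟩ := exists_wordOp_mul_wordOp_apply_basis ξ hT hS v u t
  have hvu : Forest.descend eT v (Forest.descend eS u t) = t :=
    eq_of_smul_basis_eq ξ hd (hdc.symm.trans hc)
  refine ⟨u.length - 1, v.length, ?_⟩
  rw [Nat.sub_add_cancel (List.length_pos_iff.2 hu)]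
  conv_lhs => rw [← hvu, Forest.iterate_parent_descend]
  exact Forest.iterate_parent_descend eS u t

theorem isWanderingRep_of_uniquePaths
    (hc : Function.Commute (Forest.parent eS) (Forest.parent eT)) {s : Λ}
    (hs : UniquePaths (Forest.parent eS) (Forest.parent eT) s) : ρ.IsWanderingRep (ξ s) := by
  let g (w : List (Fin m) × List (Fin n)) : Λ := Forest.descend eS w.1 (Forest.descend eT w.2 s)
  have hpath (w) : (Forest.parent eS)^[w.1.length] ((Forest.parent eT)^[w.2.length] (g w)) = s := by
    rw [(hc.iterate_iterate _ _).eq, Forest.iterate_parent_descend, Forest.iterate_parent_descend]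
  have hg : Injective g := by
    rintro ⟨u, v⟩ ⟨u', v'⟩ h
    obtain ⟨hu, hv⟩ := hs _ _ _ _ _ (hpath (u, v)) (h ▸ hpath (u', v'))
    obtain ⟨rfl, hd⟩ := Forest.eq_of_descend_eq eS hu h
    obtain ⟨rfl, -⟩ := Forest.eq_of_descend_eq eT hv hd
    rfl
  have horth : Orthonormal ℂ fun w : List (Fin m) × List (Fin n) =>
      (wordOp ρ.S w.1 * wordOp ρ.T w.2) (ξ s) :=
    orthonormal_of_unimodular_smul_basis ξ hg fun w =>
      exists_wordOp_mul_wordOp_apply_basis ξ hS hT w.1 w.2 s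
  refine ⟨ξ.orthonormal.1 s, fun u u' v v' => ?_⟩
  rw [orthonormal_iff_ite.1 horth (u, v) (u', v')]
  simp only [Prod.mk.injEq]

end TwoGraph

theorem statement3_general {m n : ℕ} (hm : 2 ≤ m) (hn : 2 ≤ n)
    {θ : Equiv.Perm (Fin m × Fin n)} {H : Type*}
    [NormedAddCommGroup H] [InnerProductSpace ℂ H] [CompleteSpace H]
    (ρ : TwoGraphRep m n θ H) (hCuntz : ρ.CuntzType)
    {Λ : Type*} (ξ : HilbertBasis Λ ℂ H) (hAtomic : ρ.AtomicBasis ξ)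
    (hcase :
      ((∃ t, ρ.HasBlueRing (ξ t)) ∧ ∀ t, ¬ ρ.HasRedRing (ξ t)) ∨
      ((∃ t, ρ.HasRedRing (ξ t)) ∧ ∀ t, ¬ ρ.HasBlueRing (ξ t)) ∨
      ((∀ t, ¬ ρ.HasBlueRing (ξ t) ∧ ¬ ρ.HasRedRing (ξ t)) ∧
        ∃ t, ρ.HasMixedRing (ξ t))) :
    ∃ ζ : H, ρ.IsWanderingRep ζ := by
  have : Nontrivial (Fin m) := Fin.nontrivial_iff_two_le.2 hm
  have : Nontrivial (Fin n) := Fin.nontrivial_iff_two_le.2 hn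
  obtain ⟨eS, hS⟩ := exists_forest_of_atomic ξ ρ.isometS hCuntz.1 hAtomic.1
  obtain ⟨eT, hT⟩ := exists_forest_of_atomic ξ ρ.isometT hCuntz.2 hAtomic.2
  have hc := commute_parent_of_atomic ξ ρ hS hT
  suffices ∃ s, UniquePaths (Forest.parent eS) (Forest.parent eT) s by
    obtain ⟨s, hs⟩ := this
    exact ⟨ξ s, isWanderingRep_of_uniquePaths ξ ρ hS hT hc hs⟩
  rcases hcase with ⟨⟨t, hblue⟩, hnored⟩ | ⟨⟨t, hred⟩, hnoblue⟩ | ⟨hnone, t, hmixed⟩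
  · obtain ⟨p, hp⟩ := (hasWordRing_basis_iff ξ hS).1 hblue
    exact Forest.exists_uniquePaths eS hc (periodicPts_parent_eq_empty ξ hT hnored) (q := 0) hp
  · obtain ⟨q, hq⟩ := (hasWordRing_basis_iff ξ hT).1 hred
    obtain ⟨s, hs⟩ := Forest.exists_uniquePaths eT hc.symm
      (periodicPts_parent_eq_empty ξ hS hnoblue) (q := 0) hq
    exact ⟨s, hs.of_swap hc⟩
  · obtain ⟨p, q, hpq⟩ := exists_iterate_eq_of_hasMixedRing ξ ρ hS hT hmixed
    exact Forest.exists_uniquePaths eS hc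
      (periodicPts_parent_eq_empty ξ hT fun t => (hnone t).2) hpq

/-- Atomic representations of type 2a, 2b, or 3b(i) have wandering vectors. -/
theorem statement3 {m n : ℕ} (hm : 2 ≤ m) (hn : 2 ≤ n)
    {θ : Equiv.Perm (Fin m × Fin n)} {H : Type*}
    [NormedAddCommGroup H] [InnerProductSpace ℂ H] [CompleteSpace H]
    (ρ : TwoGraphRep m n θ H) (hCuntz : ρ.CuntzType) (hirr : ρ.Irreducible)
    {Λ : Type*} (ξ : HilbertBasis Λ ℂ H) (hAtomic : ρ.AtomicBasis ξ)
    (hcase :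
      ((∃ t, ρ.HasBlueRing (ξ t)) ∧ ∀ t, ¬ ρ.HasRedRing (ξ t)) ∨
      ((∃ t, ρ.HasRedRing (ξ t)) ∧ ∀ t, ¬ ρ.HasBlueRing (ξ t)) ∨
      ((∀ t, ¬ ρ.HasBlueRing (ξ t) ∧ ¬ ρ.HasRedRing (ξ t)) ∧
        ∃ t, ρ.HasMixedRing (ξ t))) :
    ∃ ζ : H, ρ.IsWanderingRep ζ :=
  statement3_general hm hn ρ hCuntz ξ hAtomic hcase
end
end

section
/- Let m, n ≥ 2 and let (S,T) be an irreducible Cuntz-type atomic representation of F_θ^+ on H with standard basis {ξ_t}. Suppose V ⊆ H is a nonzero finite-dimensional subspace spanned by a set of standard basis vectors such that S_i*V ⊆ V and T_j*V ⊆ V for all i, j, such that H equals the closed linear span of {S_uT_vx : x ∈ V, u, v words}, and which is minimal among subspaces with these properties. If there exists a standard basis vector ζ orthogonal to V such that either S_uζ ∈ 𝕋ζ for some nonempty word u over {1,…,m}, or T_vζ ∈ 𝕋ζ for some nonempty word v over {1,…,n}, then some standard basis vector is a wandering vector for (S,T). -/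
noncomputable section

open scoped InnerProductSpace ComplexInnerProductSpace Classical

/-!
Atomicity and the Cuntz condition turn `S_i` and `T_j` into maps `e i`, `f j` on the index
set `Λ` of the standard basis under which every index has a unique `e`-parent and a unique
`f`-parent, and the two parent maps commute. The indices of the basis vectors in `V` form a
set `Λ₀` closed under both parent maps, and cyclicity of `V` gives every index an ancestor in
`Λ₀`. A blue ring at `ξ_x` makes `x ∉ Λ₀` periodic under the `e`-parent map; together with
the ancestor in `Λ₀` this rules out every relation `ancestor a b x = x` with `b > 0`. As
`m ≥ 2`, some child `z = e i x` lies off the periodic orbit of `x`, and then distinct pairs of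
words send `z` to distinct indices, so `ξ_z` is wandering. A red ring is handled by exchanging
the roles of `S` and `T`.
-/

/-- The maps induced on the indices of the standard basis by the generators of a Cuntz-type
atomic representation: `S_i ξ_t ∈ 𝕋 ξ_{e i t}` and `T_j ξ_t ∈ 𝕋 ξ_{f j t}`. -/
structure IndexAction (m n : ℕ) (Λ : Type*) where
  e : Fin m → Λ → Λ
  f : Fin n → Λ → Λ
  e_inj : ∀ ⦃i i' : Fin m⦄ ⦃a a' : Λ⦄, e i a = e i' a' → i = i' ∧ a = a'
  f_inj : ∀ ⦃j j' : Fin n⦄ ⦃a a' : Λ⦄, f j a = f j' a' → j = j' ∧ a = a'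
  e_surj : ∀ a : Λ, ∃ p : Fin m × Λ, e p.1 p.2 = a
  f_surj : ∀ a : Λ, ∃ p : Fin n × Λ, f p.1 p.2 = a
  e_f : ∀ (i : Fin m) (j : Fin n) (a : Λ), ∃ (i' : Fin m) (j' : Fin n),
    e i (f j a) = f j' (e i' a)
  f_e : ∀ (j : Fin n) (i : Fin m) (a : Λ), ∃ (j' : Fin n) (i' : Fin m),
    f j (e i a) = e i' (f j' a)

namespace IndexAction

variable {m n : ℕ} {Λ : Type*} (D : IndexAction m n Λ)

def swap : IndexAction n m Λ :=
  ⟨D.f, D.e, D.f_inj, D.e_inj, D.f_surj, D.e_surj, D.f_e, D.e_f⟩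

def parentE (a : Λ) : Λ := (D.e_surj a).choose.2

def labelE (a : Λ) : Fin m := (D.e_surj a).choose.1

def parentF (a : Λ) : Λ := (D.f_surj a).choose.2

def labelF (a : Λ) : Fin n := (D.f_surj a).choose.1

lemma e_labelE_parentE (a : Λ) : D.e (D.labelE a) (D.parentE a) = a :=
  (D.e_surj a).choose_spec

lemma f_labelF_parentF (a : Λ) : D.f (D.labelF a) (D.parentF a) = a :=
  (D.f_surj a).choose_spec

lemma parentE_e (i : Fin m) (a : Λ) : D.parentE (D.e i a) = a :=
  (D.e_inj (D.e_labelE_parentE _)).2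

lemma parentF_f (j : Fin n) (a : Λ) : D.parentF (D.f j a) = a :=
  (D.f_inj (D.f_labelF_parentF _)).2

lemma parentF_e (i : Fin m) (a : Λ) : ∃ i', D.parentF (D.e i a) = D.e i' (D.parentF a) := by
  obtain ⟨i', j', h⟩ := D.e_f i (D.labelF a) (D.parentF a)
  rw [D.f_labelF_parentF] at h
  exact ⟨i', by rw [h, D.parentF_f]⟩

lemma commute_parentE_parentF : Function.Commute D.parentE D.parentF := by
  intro a
  obtain ⟨i', h⟩ := D.parentF_e (D.labelE a) (D.parentE a)
  rw [D.e_labelE_parentE] at h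
  rw [h, D.parentE_e]

lemma parentF_iterate_e (b : ℕ) (i : Fin m) (a : Λ) :
    ∃ i', D.parentF^[b] (D.e i a) = D.e i' (D.parentF^[b] a) := by
  induction b generalizing i a with
  | zero => exact ⟨i, rfl⟩
  | succ b ih =>
    obtain ⟨i₁, h₁⟩ := D.parentF_e i a
    obtain ⟨i₂, h₂⟩ := ih i₁ (D.parentF a)
    exact ⟨i₂, by rw [Function.iterate_succ_apply, h₁, h₂, Function.iterate_succ_apply]⟩

def ancestor (a b : ℕ) (x : Λ) : Λ := D.parentE^[a] (D.parentF^[b] x)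

lemma ancestor_add (a b a' b' : ℕ) (x : Λ) :
    D.ancestor (a + a') (b + b') x = D.ancestor a b (D.ancestor a' b' x) := by
  simp only [ancestor, Function.iterate_add_apply,
    D.commute_parentE_parentF.iterate_iterate a' b (D.parentF^[b'] x)]

lemma ancestor_swap (a b : ℕ) (x : Λ) : D.swap.ancestor a b x = D.ancestor b a x :=
  D.commute_parentE_parentF.iterate_iterate b a x |>.symm

lemma parentE_ancestor (a b : ℕ) (x : Λ) :
    D.parentE (D.ancestor a b x) = D.ancestor a b (D.parentE x) := by
  simp only [ancestor]
  rw [← Function.iterate_succ_apply' D.parentE, Function.iterate_succ_apply,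
    D.commute_parentE_parentF.iterate_right b x]

lemma ancestor_mul_of_ancestor_eq_self {a b : ℕ} {x : Λ} (h : D.ancestor a b x = x) (k : ℕ) :
    D.ancestor (k * a) (k * b) x = x := by
  induction k with
  | zero => simp [ancestor]
  | succ k ih => rw [Nat.succ_mul, Nat.succ_mul, D.ancestor_add, h, ih]

lemma mapsTo_ancestor {Λ₀ : Set Λ} (hE : Set.MapsTo D.parentE Λ₀ Λ₀)
    (hF : Set.MapsTo D.parentF Λ₀ Λ₀) (a b : ℕ) : Set.MapsTo (D.ancestor a b) Λ₀ Λ₀ :=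
  (hE.iterate a).comp (hF.iterate b)

def applyE (u : List (Fin m)) (x : Λ) : Λ := u.foldr D.e x

def applyF (v : List (Fin n)) (x : Λ) : Λ := v.foldr D.f x

lemma parentE_iterate_applyE (u : List (Fin m)) (x : Λ) :
    D.parentE^[u.length] (D.applyE u x) = x := by
  induction u with
  | nil => rfl
  | cons i u ih =>
    rw [List.length_cons, Function.iterate_succ_apply]
    exact (congrArg _ (D.parentE_e i _)).trans ih

lemma parentF_iterate_applyE (b : ℕ) (u : List (Fin m)) (x : Λ) :
    ∃ u' : List (Fin m), u'.length = u.length ∧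
      D.parentF^[b] (D.applyE u x) = D.applyE u' (D.parentF^[b] x) := by
  induction u with
  | nil => exact ⟨[], rfl, rfl⟩
  | cons i u ih =>
    obtain ⟨u', hl, h⟩ := ih
    obtain ⟨i', h'⟩ := D.parentF_iterate_e b i (D.applyE u x)
    refine ⟨i' :: u', by simp [hl], ?_⟩
    show D.parentF^[b] (D.e i (D.applyE u x)) = D.e i' (D.applyE u' (D.parentF^[b] x))
    rw [h', h]

lemma parentF_iterate_applyF (v : List (Fin n)) (x : Λ) :
    D.parentF^[v.length] (D.applyF v x) = x :=
  D.swap.parentE_iterate_applyE v x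

lemma ancestor_applyE_applyF (u : List (Fin m)) (v : List (Fin n)) (x : Λ) :
    D.ancestor u.length v.length (D.applyE u (D.applyF v x)) = x := by
  obtain ⟨u', hl, h⟩ := D.parentF_iterate_applyE v.length u (D.applyF v x)
  rw [ancestor, h, D.parentF_iterate_applyF, ← hl, D.parentE_iterate_applyE]

lemma eq_and_eq_of_applyE_eq {u u' : List (Fin m)} {x x' : Λ} (hl : u.length = u'.length)
    (h : D.applyE u x = D.applyE u' x') : u = u' ∧ x = x' := by
  induction u generalizing u' with
  | nil => cases u' with
    | nil => exact ⟨rfl, h⟩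
    | cons => simp at hl
  | cons i u ih => cases u' with
    | nil => simp at hl
    | cons i' u' =>
      obtain ⟨rfl, h'⟩ := D.e_inj h
      obtain ⟨rfl, rfl⟩ := ih (Nat.succ_inj.mp hl) h'
      exact ⟨rfl, rfl⟩

lemma eq_and_eq_of_applyE_applyF_eq {u u' : List (Fin m)} {v v' : List (Fin n)} {x : Λ}
    (hu : u.length = u'.length) (hv : v.length = v'.length)
    (h : D.applyE u (D.applyF v x) = D.applyE u' (D.applyF v' x)) : u = u' ∧ v = v' := by
  obtain ⟨rfl, h'⟩ := D.eq_and_eq_of_applyE_eq hu h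
  exact ⟨rfl, (D.swap.eq_and_eq_of_applyE_eq hv h').1⟩

/-- Coincidences between ancestors of `z` with a common factor, such as
`parentE^[p + 1] z = parentE z`, are allowed: the parent of `z` may be periodic. -/
def IsAperiodic (z : Λ) : Prop :=
  ∀ a b c d : ℕ, min a c = 0 → min b d = 0 → D.ancestor a b z = D.ancestor c d z →
    a = c ∧ b = d

variable {D}

lemma IsAperiodic.eq_and_eq_of_ancestor_eq {z x : Λ} (hz : D.IsAperiodic z) {k l k' l' : ℕ}
    (h : D.ancestor k l x = z) (h' : D.ancestor k' l' x = z) : k = k' ∧ l = l' := by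
  have key : D.ancestor (max k k' - k) (max l l' - l) z =
      D.ancestor (max k k' - k') (max l l' - l') z := by
    calc _ = D.ancestor (max k k' - k) (max l l' - l) (D.ancestor k l x) := by rw [h]
      _ = D.ancestor (max k k') (max l l') x := by
        rw [← D.ancestor_add, Nat.sub_add_cancel (le_max_left _ _),
          Nat.sub_add_cancel (le_max_left _ _)]
      _ = D.ancestor (max k k' - k') (max l l' - l') (D.ancestor k' l' x) := by
        rw [← D.ancestor_add, Nat.sub_add_cancel (le_max_right _ _),
          Nat.sub_add_cancel (le_max_right _ _)]
      _ = _ := by rw [h']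
  have := hz _ _ _ _ (by omega) (by omega) key
  omega

lemma IsAperiodic.eq_and_eq_of_applyE_applyF_eq {z : Λ} (hz : D.IsAperiodic z)
    {u u' : List (Fin m)} {v v' : List (Fin n)}
    (h : D.applyE u (D.applyF v z) = D.applyE u' (D.applyF v' z)) : u = u' ∧ v = v' := by
  have h' := D.ancestor_applyE_applyF u' v' z
  rw [← h] at h'
  obtain ⟨hu, hv⟩ := hz.eq_and_eq_of_ancestor_eq (D.ancestor_applyE_applyF u v z) h'
  exact D.eq_and_eq_of_applyE_applyF_eq hu hv h

lemma IsAperiodic.of_swap {z : Λ} (hz : D.swap.IsAperiodic z) : D.IsAperiodic z := by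
  intro a b c d hac hbd h
  rw [← D.ancestor_swap, ← D.ancestor_swap] at h
  exact (hz b a d c hbd hac h).symm

variable (D)

lemma exists_e_ne_parentE_iterate (hm : 2 ≤ m) (x : Λ) :
    ∃ i, ∀ a, D.parentE^[a] x ≠ D.e i x := by
  by_contra! h
  have hcycle : ∀ {k i}, D.parentE^[k] x = D.e i x → D.parentE^[k + 1] x = x := fun hk => by
    rw [Function.iterate_succ_apply', hk, D.parentE_e]
  obtain ⟨a, ha⟩ := h ⟨0, by omega⟩
  obtain ⟨a', ha'⟩ := h ⟨1, by omega⟩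
  have heq : D.parentE^[a] x = D.parentE^[a'] x :=
    calc D.parentE^[a] x = D.parentE^[a] (D.parentE^[a' + 1] x) := by rw [hcycle ha']
      _ = D.parentE^[a'] (D.parentE^[a + 1] x) := by
        rw [← Function.iterate_add_apply, ← Function.iterate_add_apply, Nat.add_left_comm]
      _ = D.parentE^[a'] x := by rw [hcycle ha]
  simpa using (D.e_inj (ha.symm.trans (heq.trans ha'))).1

lemma isAperiodic_e {x : Λ} {i : Fin m}
    (hne : ∀ a b c, 0 < b → D.ancestor a b x ≠ D.parentE^[c] x)
    (hi : ∀ a, D.parentE^[a] x ≠ D.e i x) : D.IsAperiodic (D.e i x) := by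
  have hz : ∀ a, 0 < a → D.parentE^[a] (D.e i x) ≠ D.e i x := fun a ha h => hi (a - 1) <|
    calc D.parentE^[a - 1] x = D.parentE^[a - 1] (D.parentE (D.e i x)) := by rw [D.parentE_e]
      _ = D.parentE^[a] (D.e i x) := by
        rw [← Function.iterate_succ_apply, Nat.succ_eq_add_one, Nat.sub_add_cancel ha]
      _ = D.e i x := h
  intro a b c d hac hbd h
  have hx : D.ancestor a b x = D.ancestor c d x := by
    simpa only [D.parentE_ancestor, D.parentE_e] using congrArg D.parentE h
  rcases Nat.eq_zero_or_pos b with rfl | hb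
  · rcases Nat.eq_zero_or_pos d with rfl | hd
    · refine ⟨?_, rfl⟩
      rcases Nat.eq_zero_or_pos a with rfl | ha
      · rcases Nat.eq_zero_or_pos c with rfl | hc
        · rfl
        · exact absurd h.symm (hz c hc)
      · obtain rfl : c = 0 := by omega
        exact absurd h (hz a ha)
    · exact absurd hx.symm (hne c d a hd)
  · obtain rfl : d = 0 := by omega
    exact absurd hx (hne a b c hb)

section Periodic

variable {Λ₀ : Set Λ} (hE : Set.MapsTo D.parentE Λ₀ Λ₀) (hF : Set.MapsTo D.parentF Λ₀ Λ₀)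
  {x : Λ} {a₀ b₀ p : ℕ} (hx : x ∉ Λ₀) (h₀ : D.ancestor a₀ b₀ x ∈ Λ₀) (hp : 0 < p)
  (hper : D.parentE^[p] x = x)
include hE hF hx h₀ hp hper

/-- Iterating `ancestor a b x = x` together with `parentE^[p] x = x` would make `x` an ancestor
of `ancestor a₀ b₀ x ∈ Λ₀`. -/
lemma ancestor_ne_self {a b : ℕ} (hb : 0 < b) : D.ancestor a b x ≠ x := by
  intro h
  have hfix : D.ancestor (b₀ * a + a₀ * p) (b₀ * b + a₀ * 0) x = x := by
    rw [D.ancestor_add, D.ancestor_mul_of_ancestor_eq_self (show D.ancestor p 0 x = x from hper),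
      D.ancestor_mul_of_ancestor_eq_self h]
  obtain ⟨a', ha'⟩ : ∃ a', b₀ * a + a₀ * p = a' + a₀ :=
    ⟨_, (Nat.sub_add_cancel (le_add_left (Nat.le_mul_of_pos_right a₀ hp))).symm⟩
  obtain ⟨b', hb'⟩ : ∃ b', b₀ * b + a₀ * 0 = b' + b₀ :=
    ⟨_, (Nat.sub_add_cancel (by simpa using Nat.le_mul_of_pos_right b₀ hb)).symm⟩
  rw [ha', hb', D.ancestor_add] at hfix
  exact hx (hfix ▸ D.mapsTo_ancestor hE hF a' b' h₀)

lemma ancestor_ne_parentE_iterate {a b : ℕ} (hb : 0 < b) (c : ℕ) :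
    D.ancestor a b x ≠ D.parentE^[c] x := by
  intro h
  refine D.ancestor_ne_self hE hF hx h₀ hp hper hb (a := c * p - c + a) ?_
  have hcp := D.ancestor_mul_of_ancestor_eq_self (show D.ancestor p 0 x = x from hper) c
  rw [← zero_add b, D.ancestor_add, h, show D.parentE^[c] x = D.ancestor c 0 x from rfl,
    ← D.ancestor_add, Nat.sub_add_cancel (Nat.le_mul_of_pos_right c hp)]
  rwa [Nat.mul_zero] at hcp

theorem exists_isAperiodic_of_parentE_periodic (hm : 2 ≤ m) : ∃ z, D.IsAperiodic z :=
  let ⟨i, hi⟩ := D.exists_e_ne_parentE_iterate hm x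
  ⟨D.e i x, D.isAperiodic_e
    (fun _ _ c hb => D.ancestor_ne_parentE_iterate hE hF hx h₀ hp hper hb c) hi⟩

end Periodic

theorem exists_isAperiodic (hm : 2 ≤ m) (hn : 2 ≤ n) {Λ₀ : Set Λ}
    (hE : Set.MapsTo D.parentE Λ₀ Λ₀) (hF : Set.MapsTo D.parentF Λ₀ Λ₀) {x : Λ} {a₀ b₀ : ℕ}
    (hx : x ∉ Λ₀) (h₀ : D.ancestor a₀ b₀ x ∈ Λ₀)
    (hper : (∃ p, 0 < p ∧ D.parentE^[p] x = x) ∨ (∃ q, 0 < q ∧ D.parentF^[q] x = x)) :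
    ∃ z, D.IsAperiodic z := by
  rcases hper with ⟨p, hp, hper⟩ | ⟨q, hq, hper⟩
  · exact D.exists_isAperiodic_of_parentE_periodic hE hF hx h₀ hp hper hm
  · rw [← D.ancestor_swap] at h₀
    obtain ⟨z, hz⟩ := D.swap.exists_isAperiodic_of_parentE_periodic hF hE hx h₀ hq hper hn
    exact ⟨z, hz.of_swap⟩

end IndexAction

section Atomic

variable {H : Type*} [NormedAddCommGroup H] [InnerProductSpace ℂ H] {Λ : Type*}
  (ξ : HilbertBasis Λ ℂ H)

lemma HilbertBasis.inner_eq_ite (s t : Λ) : ⟪ξ s, ξ t⟫ = if s = t then 1 else 0 :=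
  orthonormal_iff_ite.mp ξ.orthonormal s t

lemma HilbertBasis.eq_zero_of_forall_inner_eq_zero {x : H} (h : ∀ t, ⟪ξ t, x⟫ = 0) : x = 0 :=
  ξ.repr.map_eq_zero_iff.mp (by ext t; simp [ξ.repr_apply_apply, h t])

variable {ξ} in
lemma HilbertBasis.eq_of_smul_eq_smul {c d : ℂ} {s t : Λ} (hc : ‖c‖ = 1)
    (h : c • ξ s = d • ξ t) : s = t :=
  ξ.orthonormal.linearIndependent.eq_of_smul_apply_eq_smul_apply c d s t
    (norm_ne_zero_iff.mp (hc ▸ one_ne_zero)) h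

def IsAtomicFamily {ι : Type*} (W : ι → H →L[ℂ] H) : Prop :=
  ∀ i t, ∃ (c : ℂ) (t' : Λ), ‖c‖ = 1 ∧ W i (ξ t) = c • ξ t'

namespace IsAtomicFamily

variable {ξ} {ι : Type*} {W : ι → H →L[ℂ] H} (hW : IsAtomicFamily ξ W)

def index (i : ι) (t : Λ) : Λ := (hW i t).choose_spec.choose

lemma exists_apply_eq (i : ι) (t : Λ) : ∃ c : ℂ, ‖c‖ = 1 ∧ W i (ξ t) = c • ξ (hW.index i t) :=
  ⟨_, (hW i t).choose_spec.choose_spec⟩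

lemma exists_wordOp_apply_eq (u : List ι) (t : Λ) :
    ∃ c : ℂ, ‖c‖ = 1 ∧ wordOp W u (ξ t) = c • ξ (u.foldr hW.index t) := by
  induction u with
  | nil => exact ⟨1, by simp, by simp [wordOp]⟩
  | cons i u ih =>
    obtain ⟨c, hc, h⟩ := ih
    obtain ⟨c', hc', h'⟩ := hW.exists_apply_eq i (u.foldr hW.index t)
    refine ⟨c * c', by simp [hc, hc'], ?_⟩
    simp only [wordOp, List.map_cons, List.prod_cons] at h ⊢
    rw [mul_apply_eq_comp, h, map_smul, h', smul_smul, List.foldr_cons]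

lemma index_index_eq {ι₂ ι₃ ι₄ : Type*} {W₂ : ι₂ → H →L[ℂ] H} {W₃ : ι₃ → H →L[ℂ] H}
    {W₄ : ι₄ → H →L[ℂ] H} (hW₂ : IsAtomicFamily ξ W₂) (hW₃ : IsAtomicFamily ξ W₃)
    (hW₄ : IsAtomicFamily ξ W₄) {i : ι} {i₂ : ι₂} {i₃ : ι₃} {i₄ : ι₄}
    (h : W i * W₂ i₂ = W₃ i₃ * W₄ i₄) (t : Λ) :
    hW.index i (hW₂.index i₂ t) = hW₃.index i₃ (hW₄.index i₄ t) := by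
  obtain ⟨c, hc, h₂⟩ := hW₂.exists_apply_eq i₂ t
  obtain ⟨c', hc', h₁⟩ := hW.exists_apply_eq i (hW₂.index i₂ t)
  obtain ⟨d, -, h₄⟩ := hW₄.exists_apply_eq i₄ t
  obtain ⟨d', -, h₃⟩ := hW₃.exists_apply_eq i₃ (hW₄.index i₄ t)
  have := congrArg (· (ξ t)) h
  simp only [mul_apply_eq_comp, h₂, h₄, map_smul, h₁, h₃, smul_smul] at this
  exact HilbertBasis.eq_of_smul_eq_smul (by simp [hc, hc']) this

variable [CompleteSpace H]

lemma index_injective [DecidableEq ι]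
    (hiso : ∀ i i', star (W i) * W i' = if i = i' then 1 else 0) {i i' : ι} {a a' : Λ}
    (h : hW.index i a = hW.index i' a') : i = i' ∧ a = a' := by
  obtain ⟨c, hc, hca⟩ := hW.exists_apply_eq i a
  obtain ⟨c', hc', hca'⟩ := hW.exists_apply_eq i' a'
  have key : ⟪ξ a, (star (W i) * W i') (ξ a')⟫ = (starRingEnd ℂ) c * c' := by
    rw [mul_apply_eq_comp, ContinuousLinearMap.star_eq_adjoint,
      ContinuousLinearMap.adjoint_inner_right, hca, hca', h, inner_smul_left, inner_smul_right,
      ξ.inner_eq_ite, if_pos rfl, mul_one]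
  have hne : (starRingEnd ℂ) c * c' ≠ 0 := by
    simp [← norm_ne_zero_iff, hc, hc']
  rw [hiso] at key
  split_ifs at key with hii
  · rw [one_apply_eq_self, ξ.inner_eq_ite] at key
    split_ifs at key with haa
    · exact ⟨hii, haa⟩
    · exact absurd key.symm hne
  · rw [zero_apply, inner_zero_right] at key
    exact absurd key.symm hne

lemma exists_index_eq [Fintype ι] (hsum : ∑ i, W i * star (W i) = 1) (t : Λ) :
    ∃ p : ι × Λ, hW.index p.1 p.2 = t := by
  by_contra! h
  have hstar : ∀ i, star (W i) (ξ t) = 0 := fun i => ξ.eq_zero_of_forall_inner_eq_zero fun s => by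
    obtain ⟨c, -, hs⟩ := hW.exists_apply_eq i s
    rw [ContinuousLinearMap.star_eq_adjoint, ContinuousLinearMap.adjoint_inner_right, hs,
      inner_smul_left, ξ.inner_eq_ite, if_neg (h (i, s)), mul_zero]
  refine ξ.orthonormal.ne_zero t ?_
  calc ξ t = (∑ i, W i * star (W i)) (ξ t) := by rw [hsum]; rfl
    _ = 0 := by simp [hstar]

lemma mem_of_index_mem {i : ι} (hiso : star (W i) * W i = 1) {V : Submodule ℂ H}
    (hV : ∀ x ∈ V, star (W i) x ∈ V) {t : Λ} (ht : ξ (hW.index i t) ∈ V) : ξ t ∈ V := by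
  obtain ⟨c, -, h⟩ := hW.exists_apply_eq i t
  have : ξ t = c • star (W i) (ξ (hW.index i t)) := by
    rw [← map_smul, ← h, ← mul_apply_eq_comp, hiso, one_apply_eq_self]
  exact this ▸ V.smul_mem c (hV _ ht)

end IsAtomicFamily

end Atomic

namespace TwoGraphRep

variable {m n : ℕ} {θ : Equiv.Perm (Fin m × Fin n)} {H : Type*}
  [NormedAddCommGroup H] [InnerProductSpace ℂ H] [CompleteSpace H]
  {ρ : TwoGraphRep m n θ H} {Λ : Type*} {ξ : HilbertBasis Λ ℂ H}

lemma star_S_mul_S (ρ : TwoGraphRep m n θ H) (i : Fin m) : star (ρ.S i) * ρ.S i = 1 := by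
  simpa using ρ.isometS i i

lemma star_T_mul_T (ρ : TwoGraphRep m n θ H) (j : Fin n) : star (ρ.T j) * ρ.T j = 1 := by
  simpa using ρ.isometT j j

namespace AtomicBasis

lemma isAtomicFamily_S (hA : ρ.AtomicBasis ξ) : IsAtomicFamily ξ ρ.S := hA.1

lemma isAtomicFamily_T (hA : ρ.AtomicBasis ξ) : IsAtomicFamily ξ ρ.T := hA.2

variable (hA : ρ.AtomicBasis ξ) (hC : ρ.CuntzType)

def indexAction : IndexAction m n Λ where
  e := hA.isAtomicFamily_S.index
  f := hA.isAtomicFamily_T.index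
  e_inj _ _ _ _ := hA.isAtomicFamily_S.index_injective ρ.isometS
  f_inj _ _ _ _ := hA.isAtomicFamily_T.index_injective ρ.isometT
  e_surj := hA.isAtomicFamily_S.exists_index_eq hC.1
  f_surj := hA.isAtomicFamily_T.exists_index_eq hC.2
  e_f i j a := ⟨_, _, hA.isAtomicFamily_S.index_index_eq hA.isAtomicFamily_T
    hA.isAtomicFamily_T hA.isAtomicFamily_S (ρ.comm i j) a⟩
  f_e j i a := ⟨(θ.symm (i, j)).2, (θ.symm (i, j)).1,
    hA.isAtomicFamily_T.index_index_eq hA.isAtomicFamily_S hA.isAtomicFamily_S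
      hA.isAtomicFamily_T (by simpa using (ρ.comm (θ.symm (i, j)).1 (θ.symm (i, j)).2).symm) a⟩

lemma exists_wordOp_mul_wordOp_apply_eq (u : List (Fin m)) (v : List (Fin n)) (t : Λ) :
    ∃ c : ℂ, ‖c‖ = 1 ∧ (wordOp ρ.S u * wordOp ρ.T v) (ξ t) =
      c • ξ ((hA.indexAction hC).applyE u ((hA.indexAction hC).applyF v t)) := by
  obtain ⟨c, hc, hv⟩ := hA.isAtomicFamily_T.exists_wordOp_apply_eq v t
  obtain ⟨c', hc', hu⟩ := hA.isAtomicFamily_S.exists_wordOp_apply_eq u (v.foldr _ t)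
  exact ⟨c * c', by simp [hc, hc'], by rw [mul_apply_eq_comp, hv, map_smul, hu, smul_smul]; rfl⟩

variable {V : Submodule ℂ H}

lemma mapsTo_parentE (hV : ∀ i, ∀ x ∈ V, star (ρ.S i) x ∈ V) :
    Set.MapsTo (hA.indexAction hC).parentE {t | ξ t ∈ V} {t | ξ t ∈ V} := fun t ht =>
  hA.isAtomicFamily_S.mem_of_index_mem (ρ.star_S_mul_S _) (hV _)
    (show ξ ((hA.indexAction hC).e _ _) ∈ V by rwa [IndexAction.e_labelE_parentE])

lemma mapsTo_parentF (hV : ∀ j, ∀ x ∈ V, star (ρ.T j) x ∈ V) :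
    Set.MapsTo (hA.indexAction hC).parentF {t | ξ t ∈ V} {t | ξ t ∈ V} := fun t ht =>
  hA.isAtomicFamily_T.mem_of_index_mem (ρ.star_T_mul_T _) (hV _)
    (show ξ ((hA.indexAction hC).f _ _) ∈ V by rwa [IndexAction.f_labelF_parentF])

lemma exists_applyE_applyF_eq (hVspan : ∃ Λ₁ : Set Λ, V = Submodule.span ℂ (⇑ξ '' Λ₁))
    (hVcyc : (Submodule.span ℂ {y : H | ∃ (u : List (Fin m)) (v : List (Fin n)),
        ∃ x ∈ V, y = (wordOp ρ.S u * wordOp ρ.T v) x}).topologicalClosure = ⊤) (t : Λ) :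
    ∃ (u : List (Fin m)) (v : List (Fin n)) (r : Λ), ξ r ∈ V ∧
      (hA.indexAction hC).applyE u ((hA.indexAction hC).applyF v r) = t := by
  by_contra! h
  obtain ⟨Λ₁, hΛ₁⟩ := hVspan
  have hgen : ∀ u v, V ≤ LinearMap.ker
      ((innerSL ℂ (ξ t) ∘L (wordOp ρ.S u * wordOp ρ.T v) : H →L[ℂ] ℂ) : H →ₗ[ℂ] ℂ) := by
    intro u v
    rw [hΛ₁, Submodule.span_le]
    rintro _ ⟨r, hr, rfl⟩
    obtain ⟨c, -, hc⟩ := hA.exists_wordOp_mul_wordOp_apply_eq hC u v r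
    have hr' : ξ r ∈ V := hΛ₁ ▸ Submodule.subset_span ⟨r, hr, rfl⟩
    simp only [SetLike.mem_coe, LinearMap.mem_ker, ContinuousLinearMap.coe_coe,
      ContinuousLinearMap.comp_apply, innerSL_apply_apply]
    rw [hc, inner_smul_right, ξ.inner_eq_ite, if_neg (h u v r hr').symm, mul_zero]
  have hperp : ξ t ∈ (Submodule.span ℂ {y : H | ∃ (u : List (Fin m)) (v : List (Fin n)),
      ∃ x ∈ V, y = (wordOp ρ.S u * wordOp ρ.T v) x})ᗮ := by
    rw [Submodule.mem_orthogonal']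
    intro y hy
    refine (Submodule.span_le (p := LinearMap.ker (innerSL ℂ (ξ t) : H →ₗ[ℂ] ℂ))).mpr ?_ hy
    rintro _ ⟨u, v, x, hx, rfl⟩
    simpa using hgen u v hx
  rw [Submodule.topologicalClosure_eq_top_iff.mp hVcyc, Submodule.mem_bot] at hperp
  exact ξ.orthonormal.ne_zero t hperp

lemma exists_parentE_iterate_eq_of_hasBlueRing {t : Λ} (h : ρ.HasBlueRing (ξ t)) :
    ∃ p, 0 < p ∧ (hA.indexAction hC).parentE^[p] t = t := by
  obtain ⟨u, hu, c, -, huc⟩ := h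
  obtain ⟨d, hd, hud⟩ := hA.isAtomicFamily_S.exists_wordOp_apply_eq u t
  have ht : (hA.indexAction hC).applyE u t = t :=
    HilbertBasis.eq_of_smul_eq_smul hd (hud.symm.trans huc)
  refine ⟨u.length, List.length_pos_iff.mpr hu, ?_⟩
  conv_lhs => rw [← ht]
  exact (hA.indexAction hC).parentE_iterate_applyE u t

lemma exists_parentF_iterate_eq_of_hasRedRing {t : Λ} (h : ρ.HasRedRing (ξ t)) :
    ∃ q, 0 < q ∧ (hA.indexAction hC).parentF^[q] t = t := by
  obtain ⟨v, hv, c, -, hvc⟩ := h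
  obtain ⟨d, hd, hvd⟩ := hA.isAtomicFamily_T.exists_wordOp_apply_eq v t
  have ht : (hA.indexAction hC).applyF v t = t :=
    HilbertBasis.eq_of_smul_eq_smul hd (hvd.symm.trans hvc)
  refine ⟨v.length, List.length_pos_iff.mpr hv, ?_⟩
  conv_lhs => rw [← ht]
  exact (hA.indexAction hC).parentF_iterate_applyF v t

lemma isWanderingRep_of_isAperiodic {z : Λ} (hz : (hA.indexAction hC).IsAperiodic z) :
    ρ.IsWanderingRep (ξ z) := by
  refine ⟨ξ.orthonormal.1 z, fun u u' v v' => ?_⟩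
  obtain ⟨c, hc, h⟩ := hA.exists_wordOp_mul_wordOp_apply_eq hC u v z
  by_cases huv : u = u' ∧ v = v'
  · obtain ⟨rfl, rfl⟩ := huv
    rw [if_pos ⟨rfl, rfl⟩, h, inner_smul_left, inner_smul_right, ξ.inner_eq_ite, if_pos rfl,
      mul_one, RCLike.conj_mul, hc]
    simp
  · obtain ⟨c', -, h'⟩ := hA.exists_wordOp_mul_wordOp_apply_eq hC u' v' z
    rw [if_neg huv, h, h', inner_smul_left, inner_smul_right, ξ.inner_eq_ite,
      if_neg fun he => huv (hz.eq_and_eq_of_applyE_applyF_eq he), mul_zero, mul_zero]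

end AtomicBasis

end TwoGraphRep

theorem statement5_general {m n : ℕ} (hm : 2 ≤ m) (hn : 2 ≤ n)
    {θ : Equiv.Perm (Fin m × Fin n)} {H : Type*}
    [NormedAddCommGroup H] [InnerProductSpace ℂ H] [CompleteSpace H]
    (ρ : TwoGraphRep m n θ H) (hCuntz : ρ.CuntzType)
    {Λ : Type*} (ξ : HilbertBasis Λ ℂ H) (hAtomic : ρ.AtomicBasis ξ)
    (V : Submodule ℂ H)
    (hVspan : ∃ Λ0 : Set Λ, V = Submodule.span ℂ (⇑ξ '' Λ0))
    (hVcoinvS : ∀ i, ∀ x ∈ V, star (ρ.S i) x ∈ V)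
    (hVcoinvT : ∀ j, ∀ x ∈ V, star (ρ.T j) x ∈ V)
    (hVcyc : (Submodule.span ℂ {y : H | ∃ (u : List (Fin m)) (v : List (Fin n)),
        ∃ x ∈ V, y = (wordOp ρ.S u * wordOp ρ.T v) x}).topologicalClosure = ⊤)
    (hζ : ∃ t : Λ, ξ t ∈ Vᗮ ∧ (ρ.HasBlueRing (ξ t) ∨ ρ.HasRedRing (ξ t))) :
    ∃ t : Λ, ρ.IsWanderingRep (ξ t) := by
  obtain ⟨t, htV, hring⟩ := hζ
  have ht : ξ t ∉ V := fun h =>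
    ξ.orthonormal.ne_zero t (Submodule.disjoint_def.mp V.orthogonal_disjoint _ h htV)
  obtain ⟨u, v, r, hr, rfl⟩ := hAtomic.exists_applyE_applyF_eq hCuntz hVspan hVcyc t
  obtain ⟨z, hz⟩ := (hAtomic.indexAction hCuntz).exists_isAperiodic hm hn
    (hAtomic.mapsTo_parentE hCuntz hVcoinvS) (hAtomic.mapsTo_parentF hCuntz hVcoinvT) ht
    (by rwa [IndexAction.ancestor_applyE_applyF])
    (hring.imp (hAtomic.exists_parentE_iterate_eq_of_hasBlueRing hCuntz)
      (hAtomic.exists_parentF_iterate_eq_of_hasRedRing hCuntz))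
  exact ⟨z, hAtomic.isWanderingRep_of_isAperiodic hCuntz hz⟩

/-- For finitely correlated (type 1) irreducible atomic representations: a blue or red ring at
a standard basis vector orthogonal to the minimal cyclic coinvariant subspace `V` yields a
standard basis vector which is wandering. -/
theorem statement5 {m n : ℕ} (hm : 2 ≤ m) (hn : 2 ≤ n)
    {θ : Equiv.Perm (Fin m × Fin n)} {H : Type*}
    [NormedAddCommGroup H] [InnerProductSpace ℂ H] [CompleteSpace H]
    (ρ : TwoGraphRep m n θ H) (hCuntz : ρ.CuntzType) (hirr : ρ.Irreducible)
    {Λ : Type*} (ξ : HilbertBasis Λ ℂ H) (hAtomic : ρ.AtomicBasis ξ)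
    (V : Submodule ℂ H) (hV0 : V ≠ ⊥) (hVfin : FiniteDimensional ℂ V)
    (hVspan : ∃ Λ0 : Set Λ, V = Submodule.span ℂ (⇑ξ '' Λ0))
    (hVcoinvS : ∀ i, ∀ x ∈ V, star (ρ.S i) x ∈ V)
    (hVcoinvT : ∀ j, ∀ x ∈ V, star (ρ.T j) x ∈ V)
    (hVcyc : (Submodule.span ℂ {y : H | ∃ (u : List (Fin m)) (v : List (Fin n)),
        ∃ x ∈ V, y = (wordOp ρ.S u * wordOp ρ.T v) x}).topologicalClosure = ⊤)
    (hVmin : ∀ V' : Submodule ℂ H, V' ≠ ⊥ → FiniteDimensional ℂ V' →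
      (∃ Λ1 : Set Λ, V' = Submodule.span ℂ (⇑ξ '' Λ1)) →
      (∀ i, ∀ x ∈ V', star (ρ.S i) x ∈ V') →
      (∀ j, ∀ x ∈ V', star (ρ.T j) x ∈ V') →
      (Submodule.span ℂ {y : H | ∃ (u : List (Fin m)) (v : List (Fin n)),
        ∃ x ∈ V', y = (wordOp ρ.S u * wordOp ρ.T v) x}).topologicalClosure = ⊤ →
      V ≤ V')
    (hζ : ∃ t : Λ, ξ t ∈ Vᗮ ∧ (ρ.HasBlueRing (ξ t) ∨ ρ.HasRedRing (ξ t))) :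
    ∃ t : Λ, ρ.IsWanderingRep (ξ t) :=
  statement5_general hm hn ρ hCuntz ξ hAtomic V hVspan hVcoinvS hVcoinvT hVcyc hζ
end
end

section
/- Let n ≥ 2, let S_1,…,S_n be isometries on a complex Hilbert space H with pairwise orthogonal ranges (S_i*S_j = δ_{i,j}I), let α be a permutation of {1,…,n}, and set T_j := S_{α(j)} for 1 ≤ j ≤ n. Define θ(i,j) := (α(j), α^{-1}(i)); then θ is a permutation of {1,…,n}×{1,…,n} and: (i) S_iT_j = T_{j'}S_{i'} whenever θ(i,j) = (i',j'), so (S,T) is an isometric representation of F_θ^+; (ii) the unital WOT-closed algebra generated by {S_1,…,S_n,T_1,…,T_n} equals the free semigroup algebra generated by S_1,…,S_n, i.e. the unital WOT-closed algebra generated by {S_1,…,S_n}; (iii) the 2-graph F_θ^+ is periodic with period (1,−1): the bijection γ := α^{-1} of {1,…,n} satisfies θ(i,j) = (γ^{-1}(j), γ(i)) for all i, j. -/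
noncomputable section

open scoped InnerProductSpace ComplexInnerProductSpace Classical

def Equiv.Perm.swapConj {ι : Type*} (α : Equiv.Perm ι) : Equiv.Perm (ι × ι) :=
  (Equiv.prodComm ι ι).trans (α.prodCongr α.symm)

@[simp]
theorem Equiv.Perm.swapConj_apply {ι : Type*} (α : Equiv.Perm ι) (i j : ι) :
    α.swapConj (i, j) = (α j, α.symm i) :=
  rfl

theorem genWotAlg_range_union_range_comp_perm {E ι : Type*} [NormedAddCommGroup E]
    [InnerProductSpace ℂ E] (S : ι → E →L[ℂ] E) (α : Equiv.Perm ι) :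
    genWotAlg (Set.range S ∪ Set.range (S ∘ α)) = genWotAlg (Set.range S) := by
  rw [EquivLike.range_comp, Set.union_self]

theorem statement11_general (n : ℕ) {H : Type*}
    [NormedAddCommGroup H] [InnerProductSpace ℂ H]
    (S : Fin n → H →L[ℂ] H)
    (α : Equiv.Perm (Fin n)) (T : Fin n → H →L[ℂ] H) (hT : ∀ j, T j = S (α j)) :
    ∃ θ : Equiv.Perm (Fin n × Fin n),
      (∀ i j, θ (i, j) = (α j, α.symm i)) ∧
      (∀ i j, S i * T j = T (θ (i, j)).2 * S (θ (i, j)).1) ∧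
      genWotAlg (Set.range S ∪ Set.range T) = genWotAlg (Set.range S) ∧
      ∃ γ : Equiv.Perm (Fin n), ∀ i j, θ (i, j) = (γ.symm j, γ i) := by
  obtain rfl : T = S ∘ α := funext hT
  refine ⟨α.swapConj, fun _ _ => rfl, fun i j => ?_,
    genWotAlg_range_union_range_comp_perm S α, α.symm, fun _ _ => rfl⟩
  simp

/-- Every free semigroup algebra is a nonself-adjoint periodic 2-graph algebra. -/
theorem statement11 (n : ℕ) (hn : 2 ≤ n) {H : Type*}
    [NormedAddCommGroup H] [InnerProductSpace ℂ H] [CompleteSpace H]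
    (S : Fin n → H →L[ℂ] H)
    (hiso : ∀ i j, star (S i) * S j = if i = j then 1 else 0)
    (α : Equiv.Perm (Fin n)) (T : Fin n → H →L[ℂ] H) (hT : ∀ j, T j = S (α j)) :
    ∃ θ : Equiv.Perm (Fin n × Fin n),
      (∀ i j, θ (i, j) = (α j, α.symm i)) ∧
      (∀ i j, S i * T j = T (θ (i, j)).2 * S (θ (i, j)).1) ∧
      genWotAlg (Set.range S ∪ Set.range T) = genWotAlg (Set.range S) ∧
      ∃ γ : Equiv.Perm (Fin n), ∀ i j, θ (i, j) = (γ.symm j, γ i) :=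
  statement11_general n S α T hT
end
end
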